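/- arXiv:2603.29720 — 2 statements merged into one kernel-verified Lean document; each statement's English description precedes it below -/
import Mathlib

section
/- Let (X,T) be a topological dynamical system, μ a T-invariant Borel probability measure on X, and Φ, Ψ measurable partitions of unity on X. Then the sequences n ↦ H̃_μ(Φ₀^{n−1}) and n ↦ H̃_μ(Φ₀^{n−1} | Ψ₀^{n−1}) are subadditive; in particular the limits h̃_μ(T,Φ) = lim_{n→∞} (1/n) H̃_μ(Φ₀^{n−1}) and h̃_μ(T,Φ | Ψ) = lim_{n→∞} (1/n) H̃_μ(Φ₀^{n−1} | Ψ₀^{n−1}) exist. -/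
open MeasureTheory Filter Set

/-! ### Partitions of unity -/

/-- A finite partition of unity on `X`: a finite family of functions `X → [0,1]`
summing to `1` everywhere. -/
structure PartUnity (X : Type*) where
  n : ℕ
  f : Fin n → X → ℝ
  nonneg : ∀ i x, 0 ≤ f i x
  le_one : ∀ i x, f i x ≤ 1
  sum_one : ∀ x, ∑ i, f i x = 1

namespace PartUnity

variable {X Y : Type*}

/-- A continuous partition of unity. -/
def Cont [TopologicalSpace X] (Φ : PartUnity X) : Prop := ∀ i, Continuous (Φ.f i)

/-- A measurable partition of unity. -/
def Meas [MeasurableSpace X] (Φ : PartUnity X) : Prop := ∀ i, Measurable (Φ.f i)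

/-- A positive partition of unity. -/
def Pos (Φ : PartUnity X) : Prop := ∀ i x, 0 < Φ.f i x

/-- The join `Φ ∨ Ψ = {φ·ψ : φ ∈ Φ, ψ ∈ Ψ}` of two partitions of unity. -/
def join (Φ Ψ : PartUnity X) : PartUnity X where
  n := Φ.n * Ψ.n
  f k x := Φ.f (finProdFinEquiv.symm k).1 x * Ψ.f (finProdFinEquiv.symm k).2 x
  nonneg k x := mul_nonneg (Φ.nonneg _ x) (Ψ.nonneg _ x)
  le_one k x := mul_le_one₀ (Φ.le_one _ x) (Ψ.nonneg _ x) (Ψ.le_one _ x)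
  sum_one x := by
    rw [← Equiv.sum_comp (finProdFinEquiv : Fin Φ.n × Fin Ψ.n ≃ Fin (Φ.n * Ψ.n))
      (fun k => Φ.f (finProdFinEquiv.symm k).1 x * Ψ.f (finProdFinEquiv.symm k).2 x)]
    simp only [Equiv.symm_apply_apply]
    rw [Fintype.sum_prod_type]
    dsimp only
    rw [← Finset.sum_mul_sum, Φ.sum_one x, Ψ.sum_one x, one_mul]

/-- Pull back a partition of unity by a map: `TΦ = {φ ∘ T : φ ∈ Φ}`. -/
def comp (Φ : PartUnity X) (T : Y → X) : PartUnity Y where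
  n := Φ.n
  f i y := Φ.f i (T y)
  nonneg i y := Φ.nonneg i (T y)
  le_one i y := Φ.le_one i (T y)
  sum_one y := Φ.sum_one (T y)

/-- The trivial partition of unity `{1}`. -/
def triv (X : Type*) : PartUnity X where
  n := 1
  f _ _ := 1
  nonneg _ _ := zero_le_one
  le_one _ _ := le_rfl
  sum_one _ := by simp

/-- `dyn T Φ n` is the dynamical join `Φ₀ⁿ⁻¹ = ⋁_{i=0}^{n-1} TⁱΦ`
(joined with a harmless trivial factor). -/
def dyn (T : X → X) (Φ : PartUnity X) : ℕ → PartUnity X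
  | 0 => triv X
  | n + 1 => Φ.join ((dyn T Φ n).comp T)

/-- The product partition of unity `Φ ⊗ Ψ` on `X × Y`. -/
def prod (Φ : PartUnity X) (Ψ : PartUnity Y) : PartUnity (X × Y) where
  n := Φ.n * Ψ.n
  f k p := Φ.f (finProdFinEquiv.symm k).1 p.1 * Ψ.f (finProdFinEquiv.symm k).2 p.2
  nonneg k p := mul_nonneg (Φ.nonneg _ _) (Ψ.nonneg _ _)
  le_one k p := mul_le_one₀ (Φ.le_one _ _) (Ψ.nonneg _ _) (Ψ.le_one _ _)
  sum_one p := by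
    rw [← Equiv.sum_comp (finProdFinEquiv : Fin Φ.n × Fin Ψ.n ≃ Fin (Φ.n * Ψ.n))
      (fun k => Φ.f (finProdFinEquiv.symm k).1 p.1 * Ψ.f (finProdFinEquiv.symm k).2 p.2)]
    simp only [Equiv.symm_apply_apply]
    rw [Fintype.sum_prod_type]
    dsimp only
    rw [← Finset.sum_mul_sum, Φ.sum_one p.1, Ψ.sum_one p.2, one_mul]

/-- The diameter of a partition of unity: the maximum of the diameters of the
supports of its members. -/
noncomputable def diam [PseudoMetricSpace X] (Φ : PartUnity X) : ℝ :=
  ⨆ i, Metric.diam (tsupport (Φ.f i))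

end PartUnity

/-! ### Metric entropy via partitions of unity -/

variable {X Y : Type*}

/-- The static entropy `H̃_μ(Φ) = Σ_φ ( −μ(φ) log μ(φ) + μ(φ log φ) )`. -/
noncomputable def statEnt [MeasurableSpace X] (μ : Measure X) (Φ : PartUnity X) : ℝ :=
  ∑ i, (-((∫ x, Φ.f i x ∂μ) * Real.log (∫ x, Φ.f i x ∂μ)) +
    ∫ x, Φ.f i x * Real.log (Φ.f i x) ∂μ)

/-- The conditional measure `μ_ψ`, determined by `μ_ψ(φ) = μ(φψ)/μ(ψ)`. -/
noncomputable def condMeas [MeasurableSpace X] (μ : Measure X) (ψ : X → ℝ) : Measure X :=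
  (ENNReal.ofReal (∫ x, ψ x ∂μ))⁻¹ • μ.withDensity (fun x => ENNReal.ofReal (ψ x))

/-- The conditional static entropy `H̃_μ(Φ | Ψ) = Σ_ψ μ(ψ) H̃_{μ_ψ}(Φ)`
(terms with `μ(ψ) = 0` vanish since they are multiplied by `μ(ψ) = 0`). -/
noncomputable def condStatEnt [MeasurableSpace X] (μ : Measure X) (Φ Ψ : PartUnity X) : ℝ :=
  ∑ j, (∫ x, Ψ.f j x ∂μ) * statEnt (condMeas μ (Ψ.f j)) Φ

/-- The local metric entropy `h̃_μ(T,Φ) = lim_n H̃_μ(Φ₀ⁿ⁻¹)/n`. -/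
noncomputable def locEnt [MeasurableSpace X] (T : X → X) (μ : Measure X) (Φ : PartUnity X) : ℝ :=
  Filter.atTop.limsup fun n : ℕ => statEnt μ (PartUnity.dyn T Φ n) / (n : ℝ)

/-- The local conditional metric entropy `h̃_μ(T,Φ|Ψ) = lim_n H̃_μ(Φ₀ⁿ⁻¹|Ψ₀ⁿ⁻¹)/n`. -/
noncomputable def condLocEnt [MeasurableSpace X] (T : X → X) (μ : Measure X)
    (Φ Ψ : PartUnity X) : ℝ :=
  Filter.atTop.limsup fun n : ℕ =>
    condStatEnt μ (PartUnity.dyn T Φ n) (PartUnity.dyn T Ψ n) / (n : ℝ)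

/-- The metric entropy `h̃_μ(T)`: supremum of `h̃_μ(T,Φ)` over continuous
partitions of unity. -/
noncomputable def metEnt [TopologicalSpace X] [MeasurableSpace X]
    (T : X → X) (μ : Measure X) : EReal :=
  ⨆ Φ : {Φ : PartUnity X // Φ.Cont}, ((locEnt T μ Φ.1 : ℝ) : EReal)

/-! ### Topological entropy via partitions of unity -/

/-- The topological static entropy `H̃(Φ) = Σ_φ sup φ`. -/
noncomputable def topStat (Φ : PartUnity X) : ℝ := ∑ i, ⨆ x, Φ.f i x

/-- The local topological entropy `h̃(T,Φ) = lim_n (1/n) log H̃(Φ₀ⁿ⁻¹)`. -/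
noncomputable def topLocEnt (T : X → X) (Φ : PartUnity X) : ℝ :=
  Filter.atTop.limsup fun n : ℕ => Real.log (topStat (PartUnity.dyn T Φ n)) / (n : ℝ)

/-- The topological entropy `h̃_top(T)`: supremum of `h̃(T,Φ)` over continuous
partitions of unity. -/
noncomputable def topEnt [TopologicalSpace X] (T : X → X) : EReal :=
  ⨆ Φ : {Φ : PartUnity X // Φ.Cont}, ((topLocEnt T Φ.1 : ℝ) : EReal)

/-! ### Classical Kolmogorov–Sinai entropy -/

/-- A finite Borel partition of `X` (indexed; atoms may be empty). -/
structure FinBorelPart (X : Type*) [MeasurableSpace X] where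
  n : ℕ
  A : Fin n → Set X
  meas : ∀ i, MeasurableSet (A i)
  disj : ∀ i j, i ≠ j → Disjoint (A i) (A j)
  cover : ⋃ i, A i = Set.univ

/-- Local Kolmogorov–Sinai entropy `h_μ(T,𝒜) = lim_n (1/n) Σ_{A ∈ 𝒜₀ⁿ⁻¹} −μ(A) log μ(A)`. -/
noncomputable def ksLocEnt [MeasurableSpace X] (T : X → X) (μ : Measure X)
    (P : FinBorelPart X) : ℝ :=
  Filter.atTop.limsup fun n : ℕ =>
    (∑ σ : Fin n → Fin P.n,
      Real.negMulLog (μ (⋂ i : Fin n, T^[(i : ℕ)] ⁻¹' P.A (σ i))).toReal) / (n : ℝ)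

/-- The Kolmogorov–Sinai metric entropy `h_μ(T)`. -/
noncomputable def ksEnt [MeasurableSpace X] (T : X → X) (μ : Measure X) : EReal :=
  ⨆ P : FinBorelPart X, ((ksLocEnt T μ P : ℝ) : EReal)

/-! ### Classical topological entropy via open covers -/

/-- A finite open cover of `X`. -/
structure FinOpenCover (X : Type*) [TopologicalSpace X] where
  n : ℕ
  U : Fin n → Set X
  opn : ∀ i, IsOpen (U i)
  cov : ⋃ i, U i = Set.univ

/-- The member `⋂_{i<n} T^{-i} U_{σ(i)}` of the dynamical refinement of a cover. -/
def dynSet (T : X → X) {m : ℕ} (U : Fin m → Set X) (n : ℕ) (σ : Fin n → Fin m) : Set X :=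
  ⋂ i : Fin n, T^[(i : ℕ)] ⁻¹' U (σ i)

/-- Minimal cardinality of a subfamily of `V` covering `S`. -/
noncomputable def coverNum {α : Type*} [Fintype α] (V : α → Set X) (S : Set X) : ℕ :=
  sInf {k | ∃ t : Finset α, t.card = k ∧ S ⊆ ⋃ i ∈ t, V i}

/-- The local classical topological entropy `h(T,𝒰)` of an open cover. -/
noncomputable def covLocEnt [TopologicalSpace X] (T : X → X) (C : FinOpenCover X) : ℝ :=
  Filter.atTop.limsup fun n : ℕ =>
    Real.log ((coverNum (fun σ : Fin n → Fin C.n => dynSet T C.U n σ) Set.univ : ℕ) : ℝ) / (n : ℝ)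

/-- The classical topological entropy `h_top(T)` via open covers. -/
noncomputable def topEntCov [TopologicalSpace X] (T : X → X) : EReal :=
  ⨆ C : FinOpenCover X, ((covLocEnt T C : ℝ) : EReal)

/-! ### Misiurewicz topological tail entropy -/

/-- The local conditional topological entropy `h(𝒰|𝒱)` of two open covers. -/
noncomputable def misCondLoc [TopologicalSpace X] (T : X → X) (CU CV : FinOpenCover X) : ℝ :=
  Filter.atTop.limsup fun n : ℕ =>
    Real.log (((⨆ τ : Fin n → Fin CV.n,
      coverNum (fun σ : Fin n → Fin CU.n => dynSet T CU.U n σ) (dynSet T CV.U n τ) : ℕ)) : ℝ) / (n : ℝ)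

/-- The conditional topological entropy `h(T|𝒱) = sup_𝒰 h(𝒰|𝒱)`. -/
noncomputable def misCond [TopologicalSpace X] (T : X → X) (CV : FinOpenCover X) : EReal :=
  ⨆ CU : FinOpenCover X, ((misCondLoc T CU CV : ℝ) : EReal)

/-- Misiurewicz's topological tail entropy `h*(T) = inf_𝒱 h(T|𝒱)`. -/
noncomputable def misTail [TopologicalSpace X] (T : X → X) : EReal :=
  ⨅ CV : FinOpenCover X, misCond T CV

/-! ### Topological tail entropy via partitions of unity -/

/-- `H̃(Φ|ψ) = Σ_φ sup_{supp ψ} φ`. -/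
noncomputable def condTopStatPU [TopologicalSpace X] (Φ : PartUnity X) (ψ : X → ℝ) : ℝ :=
  ∑ i, ⨆ x ∈ tsupport ψ, Φ.f i x

/-- The weight set `D(Ψ) = {a : inf ψ ≤ a_ψ ≤ sup ψ, Σ a_ψ = 1}`. -/
def weights (Ψ : PartUnity X) : Set (Fin Ψ.n → ℝ) :=
  {a | (∀ j, (⨅ x, Ψ.f j x) ≤ a j ∧ a j ≤ ⨆ x, Ψ.f j x) ∧ ∑ j, a j = 1}

/-- `H̃_n(Φ|Ψ) = sup_{a ∈ D(Ψ₀ⁿ⁻¹)} Σ_ψ a_ψ H̃(Φ₀ⁿ⁻¹|ψ)`. -/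
noncomputable def tailStat [TopologicalSpace X] (T : X → X) (Φ Ψ : PartUnity X) (n : ℕ) : ℝ :=
  sSup {r | ∃ a ∈ weights (PartUnity.dyn T Ψ n),
    r = ∑ j, a j * condTopStatPU (PartUnity.dyn T Φ n) ((PartUnity.dyn T Ψ n).f j)}

/-- The local conditional topological entropy `h̃(Φ|Ψ) = limsup_n (1/n) log H̃_n(Φ|Ψ)`. -/
noncomputable def tailLoc [TopologicalSpace X] (T : X → X) (Φ Ψ : PartUnity X) : ℝ :=
  Filter.atTop.limsup fun n : ℕ => Real.log (tailStat T Φ Ψ n) / (n : ℝ)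

/-- The conditional topological entropy `h̃(T|Ψ) = sup_Φ h̃(Φ|Ψ)` over continuous `Φ`. -/
noncomputable def condTopEntPU [TopologicalSpace X] (T : X → X) (Ψ : PartUnity X) : EReal :=
  ⨆ Φ : {Φ : PartUnity X // Φ.Cont}, ((tailLoc T Φ.1 Ψ : ℝ) : EReal)

/-- The topological tail entropy `h̃*(T) = inf_Ψ h̃(T|Ψ)` over continuous `Ψ`. -/
noncomputable def tailEntPU [TopologicalSpace X] (T : X → X) : EReal :=
  ⨅ Ψ : {Ψ : PartUnity X // Ψ.Cont}, condTopEntPU T Ψ.1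

/-! ### Pressures -/

/-- The Birkhoff sum `S_n g = Σ_{i<n} g ∘ Tⁱ`. -/
def birkhoff (T : X → X) (g : X → ℝ) (n : ℕ) (x : X) : ℝ :=
  ∑ i ∈ Finset.range n, g (T^[i] x)

/-- The static pressure `P̃(T,g,Φ,n) = Σ_{φ ∈ Φ₀ⁿ⁻¹} sup (φ e^{S_n g})`. -/
noncomputable def puPressStat (T : X → X) (g : X → ℝ) (Φ : PartUnity X) (n : ℕ) : ℝ :=
  ∑ i, ⨆ x, (PartUnity.dyn T Φ n).f i x * Real.exp (birkhoff T g n x)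

/-- The local topological pressure `P̃_top(T,g,Φ) = lim_n (1/n) log P̃(T,g,Φ,n)`. -/
noncomputable def puLocPress (T : X → X) (g : X → ℝ) (Φ : PartUnity X) : ℝ :=
  Filter.atTop.limsup fun n : ℕ => Real.log (puPressStat T g Φ n) / (n : ℝ)

/-- The topological pressure `P̃_top(T,g)` via continuous partitions of unity. -/
noncomputable def puTopPress [TopologicalSpace X] (T : X → X) (g : X → ℝ) : EReal :=
  ⨆ Φ : {Φ : PartUnity X // Φ.Cont}, ((puLocPress T g Φ.1 : ℝ) : EReal)

/-- The classical static pressure of an open cover: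
`inf { Σ_{V ∈ 𝒱} sup_V e^{S_n g} : 𝒱 a subcover of 𝒰₀ⁿ⁻¹ }`. -/
noncomputable def covPressStat [TopologicalSpace X] (T : X → X) (g : X → ℝ)
    (C : FinOpenCover X) (n : ℕ) : ℝ :=
  sInf {r | ∃ t : Finset (Fin n → Fin C.n),
    (Set.univ ⊆ ⋃ σ ∈ t, dynSet T C.U n σ) ∧
    r = ∑ σ ∈ t, ⨆ x ∈ dynSet T C.U n σ, Real.exp (birkhoff T g n x)}

/-- The local classical topological pressure of an open cover. -/
noncomputable def covLocPress [TopologicalSpace X] (T : X → X) (g : X → ℝ)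
    (C : FinOpenCover X) : ℝ :=
  Filter.atTop.limsup fun n : ℕ => Real.log (covPressStat T g C n) / (n : ℝ)

/-- The classical topological pressure `P_top(T,g)` via open covers. -/
noncomputable def topPress [TopologicalSpace X] (T : X → X) (g : X → ℝ) : EReal :=
  ⨆ C : FinOpenCover X, ((covLocPress T g C : ℝ) : EReal)

/-! ### Topological tail pressure -/

/-- `P̃_n(T,g,Φ|Ψ) = sup_{a ∈ D(Ψ₀ⁿ⁻¹)} Σ_ψ a_ψ Σ_φ sup_{supp ψ} (φ e^{S_n g})`. -/
noncomputable def tailPressStat [TopologicalSpace X] (T : X → X) (g : X → ℝ)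
    (Φ Ψ : PartUnity X) (n : ℕ) : ℝ :=
  sSup {r | ∃ a ∈ weights (PartUnity.dyn T Ψ n),
    r = ∑ j, a j * ∑ i, ⨆ x ∈ tsupport ((PartUnity.dyn T Ψ n).f j),
      (PartUnity.dyn T Φ n).f i x * Real.exp (birkhoff T g n x)}

/-- The local topological tail pressure `P̃(T,g,Φ|Ψ) = limsup_n (1/n) log P̃_n(T,g,Φ|Ψ)`. -/
noncomputable def tailLocPress [TopologicalSpace X] (T : X → X) (g : X → ℝ)
    (Φ Ψ : PartUnity X) : ℝ :=
  Filter.atTop.limsup fun n : ℕ => Real.log (tailPressStat T g Φ Ψ n) / (n : ℝ)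

/-- The conditional topological pressure `P̃(T,g|Ψ) = sup_Φ P̃(T,g,Φ|Ψ)` over continuous `Φ`. -/
noncomputable def condTopPressPU [TopologicalSpace X] (T : X → X) (g : X → ℝ)
    (Ψ : PartUnity X) : EReal :=
  ⨆ Φ : {Φ : PartUnity X // Φ.Cont}, ((tailLocPress T g Φ.1 Ψ : ℝ) : EReal)

/-- The topological tail pressure `P̃*(T,g) = inf_Ψ P̃(T,g|Ψ)` over continuous `Ψ`. -/
noncomputable def puTailPress [TopologicalSpace X] (T : X → X) (g : X → ℝ) : EReal :=
  ⨅ Ψ : {Ψ : PartUnity X // Ψ.Cont}, condTopPressPU T g Ψ.1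

/-! ### Classical topological tail pressure (Li–Chen–Cheng) -/

/-- The Bowen ball `B(x,ε,n) = {y : d(Tⁱx,Tⁱy) < ε for all 0 ≤ i < n}`. -/
def bowenBall [PseudoMetricSpace X] (T : X → X) (x : X) (ε : ℝ) (n : ℕ) : Set X :=
  {y | ∀ i < n, dist (T^[i] x) (T^[i] y) < ε}

/-- `E` is `(n,δ)`-separated: distinct points `y,z ∈ E` satisfy `d(Tⁱy,Tⁱz) > δ`
for some `0 ≤ i < n`. -/
def IsSep [PseudoMetricSpace X] (T : X → X) (n : ℕ) (δ : ℝ) (E : Finset X) : Prop :=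
  ∀ y ∈ E, ∀ z ∈ E, y ≠ z → ∃ i < n, δ < dist (T^[i] y) (T^[i] z)

/-- `P_n(T,g,δ,ε) = sup_x sup { Σ_{y∈E} e^{S_n g(y)} : E (n,δ)-separated ⊆ B(x,ε,n) }`. -/
noncomputable def sepPress [PseudoMetricSpace X] (T : X → X) (g : X → ℝ)
    (n : ℕ) (δ ε : ℝ) : ℝ :=
  ⨆ x : X, sSup {r | ∃ E : Finset X, ↑E ⊆ bowenBall T x ε n ∧ IsSep T n δ E ∧
    r = ∑ y ∈ E, Real.exp (birkhoff T g n y)}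

/-- The classical topological tail pressure
`P*(T,g) = lim_{ε→0} lim_{δ→0} limsup_n (1/n) log P_n(T,g,δ,ε)`
(the inner limits are monotone, hence given by `inf_ε sup_δ`). -/
noncomputable def tailPress [PseudoMetricSpace X] (T : X → X) (g : X → ℝ) : EReal :=
  ⨅ ε : {ε : ℝ // 0 < ε}, ⨆ δ : {δ : ℝ // 0 < δ},
    Filter.atTop.limsup fun n : ℕ => ((Real.log (sepPress T g n δ.1 ε.1) / (n : ℝ) : ℝ) : EReal)

/-!
Write `η(t) = -t log t`. For a measurable partition of unity,
`H̃_μ(Φ) = Σ_φ η(μ φ) - ∫ Σ_φ η(φ x) dμ`, and the integrand is additive under joins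
(`Σ_{φ,ψ} η(φ ψ) = Σ_φ η(φ) + Σ_ψ η(ψ)` because `Σ φ = Σ ψ = 1`). Hence in an inequality
between sums of static entropies of joins in which every partition occurs equally often on both
sides, the integrals cancel, leaving the same inequality for the Shannon entropies of the mass
vectors `(μ(φ ψ χ))`, whose marginals are the masses of the partial joins. Strong
subadditivity of Shannon entropy (Gibbs' inequality) thus gives
`H̃(A ∨ C ∨ B) + H̃(C) ≤ H̃(A ∨ C) + H̃(C ∨ B)`; together with the chain rule
`H̃(Φ | Ψ) = H̃(Φ ∨ Ψ) - H̃(Ψ)` it yields `H̃(A ∨ B | C ∨ D) ≤ H̃(A | C) + H̃(B | D)`.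
Since `Φ₀^{n+m-1} = Φ₀^{n-1} ∨ T⁻ⁿ Φ₀^{m-1}` and `T` preserves `μ`, both sequences are subadditive;
they are nonnegative by Jensen's inequality, so Fekete's lemma gives the limits.
-/

open Real

lemma Real.mul_log_le_mul_log_add_sub {p q : ℝ} (hp : 0 ≤ p) (hq : 0 ≤ q) (hpq : 0 < p → 0 < q) :
    p * log q ≤ p * log p + q - p := by
  rcases hp.eq_or_lt with rfl | hp
  · simpa using hq
  have hq := hpq hp
  have h := log_le_sub_one_of_pos (div_pos hq hp)
  rw [log_div hq.ne' hp.ne'] at h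
  have h' : p * (log q - log p) ≤ p * (q / p - 1) := mul_le_mul_of_nonneg_left h hp.le
  have hqp : p * (q / p - 1) = q - p := by field_simp
  linarith

theorem Real.sum_mul_log_le_sum_mul_log {α : Type*} [Fintype α] {p q : α → ℝ}
    (hp : ∀ a, 0 ≤ p a) (hq : ∀ a, 0 ≤ q a) (hpq : ∀ a, 0 < p a → 0 < q a)
    (hsum : ∑ a, q a = ∑ a, p a) :
    ∑ a, p a * log (q a) ≤ ∑ a, p a * log (p a) := by
  have h := Finset.sum_le_sum fun a (_ : a ∈ Finset.univ) =>
    mul_log_le_mul_log_add_sub (hp a) (hq a) (hpq a)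
  rw [Finset.sum_sub_distrib, Finset.sum_add_distrib, hsum] at h
  linarith

theorem Real.strongSubadditive_sum_negMulLog {ι κ σ : Type*} [Fintype ι] [Fintype κ]
    [Fintype σ] (P : ι → κ → σ → ℝ) (hP : ∀ i q r, 0 ≤ P i q r) :
    ∑ i, ∑ q, ∑ r, negMulLog (P i q r) + ∑ q, negMulLog (∑ i, ∑ r, P i q r)
      ≤ ∑ i, ∑ q, negMulLog (∑ r, P i q r) + ∑ q, ∑ r, negMulLog (∑ i, P i q r) := by
  set m : ι → κ → ℝ := fun i q => ∑ r, P i q r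
  set w : κ → σ → ℝ := fun q r => ∑ i, P i q r
  set b : κ → ℝ := fun q => ∑ i, ∑ r, P i q r
  have hm0 : ∀ i q, 0 ≤ m i q := fun i q => Finset.sum_nonneg fun r _ => hP i q r
  have hPm : ∀ i q r, P i q r ≤ m i q := fun i q r =>
    Finset.single_le_sum (fun r _ => hP i q r) (Finset.mem_univ r)
  have hPw : ∀ i q r, P i q r ≤ w q r := fun i q r =>
    Finset.single_le_sum (fun i _ => hP i q r) (Finset.mem_univ i)
  have hmb : ∀ i q, m i q ≤ b q := fun i q =>
    Finset.single_le_sum (f := fun i => m i q) (fun i _ => hm0 i q) (Finset.mem_univ i)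
  set Q : ι → κ → σ → ℝ := fun i q r => m i q * w q r / b q with hQ
  have hlogQ : ∀ i q r, P i q r * log (Q i q r)
      = P i q r * log (m i q) + P i q r * log (w q r) - P i q r * log (b q) := by
    intro i q r
    rcases (hP i q r).eq_or_lt with h | h
    · simp [← h]
    have hm := h.trans_le (hPm i q r)
    have hw := h.trans_le (hPw i q r)
    rw [hQ, log_div (mul_pos hm hw).ne' (hm.trans_le (hmb i q)).ne', log_mul hm.ne' hw.ne']
    ring
  have hsumQ : ∑ i, ∑ q, ∑ r, Q i q r = ∑ i, ∑ q, ∑ r, P i q r := by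
    rw [Finset.sum_comm, Finset.sum_comm (f := fun i q => ∑ r, P i q r)]
    refine Finset.sum_congr rfl fun q _ => ?_
    simp only [hQ, mul_div_assoc, ← Finset.mul_sum, ← Finset.sum_mul, ← Finset.sum_div]
    rw [show ∑ r, w q r = b q from Finset.sum_comm]
    exact (mul_div_assoc _ _ _).symm.trans (mul_self_div_self (b q))
  have hm_log : ∑ i, ∑ q, ∑ r, P i q r * log (m i q) = ∑ i, ∑ q, m i q * log (m i q) := by
    simp only [← Finset.sum_mul]; rfl
  have hw_log : ∑ i, ∑ q, ∑ r, P i q r * log (w q r) = ∑ q, ∑ r, w q r * log (w q r) := by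
    rw [Finset.sum_comm]
    exact Finset.sum_congr rfl fun q _ => by rw [Finset.sum_comm]; simp only [← Finset.sum_mul]; rfl
  have hb_log : ∑ i, ∑ q, ∑ r, P i q r * log (b q) = ∑ q, b q * log (b q) := by
    simp only [← Finset.sum_mul]; rw [Finset.sum_comm]; simp only [← Finset.sum_mul]; rfl
  -- Gibbs' inequality against the product `m * w / b` of the two marginals
  have key := sum_mul_log_le_sum_mul_log (p := fun t : ι × κ × σ => P t.1 t.2.1 t.2.2)
    (q := fun t => Q t.1 t.2.1 t.2.2) (fun t => hP t.1 t.2.1 t.2.2)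
    (fun ⟨i, q, r⟩ => div_nonneg (mul_nonneg (hm0 i q) ((hP i q r).trans (hPw i q r)))
      ((hm0 i q).trans (hmb i q)))
    (fun ⟨i, q, r⟩ h => div_pos (mul_pos (h.trans_le (hPm i q r)) (h.trans_le (hPw i q r)))
      ((h.trans_le (hPm i q r)).trans_le (hmb i q)))
    (by simpa only [Fintype.sum_prod_type] using hsumQ)
  simp only [Fintype.sum_prod_type, hlogQ, Finset.sum_add_distrib, Finset.sum_sub_distrib,
    hm_log, hw_log, hb_log] at key
  change ∑ i, ∑ q, ∑ r, negMulLog (P i q r) + ∑ q, negMulLog (b q)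
    ≤ ∑ i, ∑ q, negMulLog (m i q) + ∑ q, ∑ r, negMulLog (w q r)
  simp only [negMulLog, neg_mul, Finset.sum_neg_distrib]
  linarith

lemma Real.mul_negMulLog_inv_mul {c : ℝ} (hc : 0 < c) (p : ℝ) :
    c * negMulLog (c⁻¹ * p) = negMulLog p + p * log c := by
  rw [negMulLog_mul, negMulLog, log_inv]
  field_simp
  ring

namespace PartUnity

/-- `Φ` and `Ψ` list the same functions in different orders: joins are associative and
commutative only up to this relation. -/
def Perm (Φ Ψ : PartUnity X) : Prop := ∃ e : Fin Φ.n ≃ Fin Ψ.n, ∀ i, Ψ.f (e i) = Φ.f i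

def joinEquiv (Φ Ψ : PartUnity X) : Fin Φ.n × Fin Ψ.n ≃ Fin (Φ.join Ψ).n := finProdFinEquiv

@[simp] lemma join_f_joinEquiv (Φ Ψ : PartUnity X) (p : Fin Φ.n × Fin Ψ.n) :
    (Φ.join Ψ).f (joinEquiv Φ Ψ p) = fun x => Φ.f p.1 x * Ψ.f p.2 x := by
  change (fun x => Φ.f (finProdFinEquiv.symm (finProdFinEquiv p)).1 x *
    Ψ.f (finProdFinEquiv.symm (finProdFinEquiv p)).2 x) = _
  rw [Equiv.symm_apply_apply]

lemma sum_join {M : Type*} [AddCommMonoid M] (G : (X → ℝ) → M) (Φ Ψ : PartUnity X) :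
    ∑ k, G ((Φ.join Ψ).f k) = ∑ i, ∑ j, G (fun x => Φ.f i x * Ψ.f j x) := by
  rw [← (joinEquiv Φ Ψ).sum_comp, Fintype.sum_prod_type]
  simp only [join_f_joinEquiv]

lemma join_comp (Φ Ψ : PartUnity X) (S : Y → X) :
    (Φ.join Ψ).comp S = (Φ.comp S).join (Ψ.comp S) := rfl

lemma dyn_succ (T : X → X) (Φ : PartUnity X) (n : ℕ) :
    dyn T Φ (n + 1) = Φ.join ((dyn T Φ n).comp T) := rfl

lemma perm_of_equiv {α : Type*} {Φ Ψ : PartUnity X} (eΦ : α ≃ Fin Φ.n) (eΨ : α ≃ Fin Ψ.n)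
    (h : ∀ a, Φ.f (eΦ a) = Ψ.f (eΨ a)) : Φ.Perm Ψ :=
  ⟨eΦ.symm.trans eΨ, fun i => by simpa using (h (eΦ.symm i)).symm⟩

namespace Perm

variable {Φ Ψ Θ : PartUnity X}

lemma refl (Φ : PartUnity X) : Φ.Perm Φ := ⟨.refl _, fun _ => rfl⟩

lemma symm : Φ.Perm Ψ → Ψ.Perm Φ := fun ⟨e, he⟩ =>
  ⟨e.symm, fun j => by rw [← he, e.apply_symm_apply]⟩

lemma trans : Φ.Perm Ψ → Ψ.Perm Θ → Φ.Perm Θ := fun ⟨e, he⟩ ⟨e', he'⟩ =>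
  ⟨e.trans e', fun i => by rw [Equiv.trans_apply, he', he]⟩

lemma sum_eq {M : Type*} [AddCommMonoid M] (h : Φ.Perm Ψ) (G : (X → ℝ) → M) :
    ∑ i, G (Φ.f i) = ∑ j, G (Ψ.f j) := by
  obtain ⟨e, he⟩ := h
  rw [← e.sum_comp]
  simp only [he]

lemma comp (h : Φ.Perm Ψ) (S : Y → X) : (Φ.comp S).Perm (Ψ.comp S) :=
  let ⟨e, he⟩ := h
  ⟨e, fun i => funext fun y => congrFun (he i) (S y)⟩

lemma join {Φ' Ψ' : PartUnity X} (hΦ : Φ.Perm Φ') (hΨ : Ψ.Perm Ψ') :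
    (Φ.join Ψ).Perm (Φ'.join Ψ') := by
  obtain ⟨e, he⟩ := hΦ
  obtain ⟨e', he'⟩ := hΨ
  exact perm_of_equiv (joinEquiv Φ Ψ) ((e.prodCongr e').trans (joinEquiv Φ' Ψ'))
    fun p => by simp [he, he']

end Perm

lemma perm_join_comm (Φ Ψ : PartUnity X) : (Φ.join Ψ).Perm (Ψ.join Φ) :=
  perm_of_equiv (joinEquiv Φ Ψ) ((Equiv.prodComm _ _).trans (joinEquiv Ψ Φ))
    fun p => by simp [mul_comm]

lemma perm_join_assoc (Φ Ψ Θ : PartUnity X) :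
    ((Φ.join Ψ).join Θ).Perm (Φ.join (Ψ.join Θ)) :=
  perm_of_equiv
    ((Equiv.prodAssoc _ _ _).symm.trans
      (((joinEquiv Φ Ψ).prodCongr (.refl _)).trans (joinEquiv _ Θ)))
    (((Equiv.refl _).prodCongr (joinEquiv Ψ Θ)).trans (joinEquiv Φ _))
    fun p => by simp [mul_assoc]

lemma perm_triv_join (Φ : PartUnity X) : ((triv X).join Φ).Perm Φ := by
  have : Unique (Fin (triv X).n) := inferInstanceAs (Unique (Fin 1))
  refine perm_of_equiv ((Equiv.uniqueProd _ _).symm.trans (joinEquiv (triv X) Φ)) (.refl _)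
    fun i => ?_
  simp only [Equiv.trans_apply, join_f_joinEquiv]
  exact funext fun x => one_mul _

lemma perm_dyn_add (T : X → X) (Φ : PartUnity X) (n m : ℕ) :
    (dyn T Φ (n + m)).Perm ((dyn T Φ n).join ((dyn T Φ m).comp T^[n])) := by
  induction n with
  | zero => rw [Nat.zero_add]; exact (perm_triv_join _).symm
  | succ n ih =>
    rw [Nat.succ_add, dyn_succ, dyn_succ]
    exact ((Perm.refl Φ).join (ih.comp T)).trans
      (perm_join_assoc Φ ((dyn T Φ n).comp T) ((dyn T Φ m).comp T^[n + 1])).symm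

noncomputable def entAt (Φ : PartUnity X) (x : X) : ℝ := ∑ i, negMulLog (Φ.f i x)

lemma entAt_join (Φ Ψ : PartUnity X) (x : X) :
    (Φ.join Ψ).entAt x = Φ.entAt x + Ψ.entAt x := by
  simp only [entAt, sum_join (fun f => negMulLog (f x)), negMulLog_mul, Finset.sum_add_distrib,
    ← Finset.sum_mul, ← Finset.mul_sum, Φ.sum_one, Ψ.sum_one, one_mul]

section Measure

variable [MeasurableSpace X] {μ : Measure X} {Φ Ψ : PartUnity X}

lemma Meas.join (hΦ : Φ.Meas) (hΨ : Ψ.Meas) : (Φ.join Ψ).Meas :=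
  fun _ => (hΦ _).mul (hΨ _)

lemma Meas.comp [MeasurableSpace Y] {S : Y → X} (hΦ : Φ.Meas) (hS : Measurable S) :
    (Φ.comp S).Meas :=
  fun i => (hΦ i).comp hS

lemma meas_triv : (triv X).Meas := fun _ => measurable_const

lemma Meas.dyn {T : X → X} (hΦ : Φ.Meas) (hT : Measurable T) : ∀ n, (dyn T Φ n).Meas
  | 0 => meas_triv
  | n + 1 => hΦ.join ((hΦ.dyn hT n).comp hT)

lemma Meas.integrable [IsFiniteMeasure μ] (hΦ : Φ.Meas) (i : Fin Φ.n) : Integrable (Φ.f i) μ :=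
  .of_bound (hΦ i).aestronglyMeasurable 1 <| ae_of_all _ fun x => by
    rw [norm_of_nonneg (Φ.nonneg i x)]; exact Φ.le_one i x

lemma Meas.integrable_mul (hΦ : Φ.Meas) (i : Fin Φ.n) {h : X → ℝ} (hh : Integrable h μ) :
    Integrable (fun x => Φ.f i x * h x) μ :=
  hh.bdd_mul (hΦ i).aestronglyMeasurable <| ae_of_all _ fun x => by
    rw [norm_of_nonneg (Φ.nonneg i x)]; exact Φ.le_one i x

lemma Meas.sum_integral_mul (hΨ : Ψ.Meas) {h : X → ℝ} (hh : Integrable h μ) :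
    ∑ j, ∫ x, Ψ.f j x * h x ∂μ = ∫ x, h x ∂μ := by
  rw [← integral_finsetSum _ fun j _ => hΨ.integrable_mul j hh]
  simp only [← Finset.sum_mul, Ψ.sum_one, one_mul]

lemma Meas.integrable_negMulLog [IsFiniteMeasure μ] (hΦ : Φ.Meas) (i : Fin Φ.n) :
    Integrable (fun x => negMulLog (Φ.f i x)) μ :=
  .of_bound (continuous_negMulLog.measurable.comp (hΦ i)).aestronglyMeasurable 1 <|
    ae_of_all _ fun x => by
      have h0 := negMulLog_nonneg (Φ.nonneg i x) (Φ.le_one i x)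
      rw [norm_of_nonneg h0]
      linarith [negMulLog_le_one_sub_self (Φ.nonneg i x), Φ.nonneg i x]

lemma Meas.integrable_entAt [IsFiniteMeasure μ] (hΦ : Φ.Meas) : Integrable Φ.entAt μ :=
  integrable_finsetSum _ fun i _ => hΦ.integrable_negMulLog i

end Measure

noncomputable def massEnt [MeasurableSpace X] (μ : Measure X) (Φ : PartUnity X) : ℝ :=
  ∑ i, negMulLog (∫ x, Φ.f i x ∂μ)

lemma massEnt_join [MeasurableSpace X] (μ : Measure X) (Φ Ψ : PartUnity X) :
    massEnt μ (Φ.join Ψ) = ∑ i, ∑ j, negMulLog (∫ x, Φ.f i x * Ψ.f j x ∂μ) :=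
  sum_join (fun f => negMulLog (∫ x, f x ∂μ)) Φ Ψ

end PartUnity

open PartUnity

section StaticEntropy

variable [MeasurableSpace X] {μ : Measure X} {Φ Ψ A B C D : PartUnity X}

lemma statEnt_eq_massEnt_sub_integral_entAt [IsFiniteMeasure μ] (hΦ : Φ.Meas) :
    statEnt μ Φ = massEnt μ Φ - ∫ x, Φ.entAt x ∂μ := by
  simp only [statEnt, massEnt, entAt]
  rw [integral_finsetSum _ fun i _ => hΦ.integrable_negMulLog i,
    ← Finset.sum_sub_distrib]
  simp only [negMulLog, neg_mul, integral_neg, sub_neg_eq_add]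

lemma PartUnity.Perm.statEnt_eq (h : Φ.Perm Ψ) (μ : Measure X) : statEnt μ Φ = statEnt μ Ψ :=
  h.sum_eq fun f => -((∫ x, f x ∂μ) * log (∫ x, f x ∂μ)) + ∫ x, f x * log (f x) ∂μ

lemma PartUnity.Perm.condStatEnt_eq {Φ' Ψ' : PartUnity X} (hΦ : Φ.Perm Φ') (hΨ : Ψ.Perm Ψ') :
    condStatEnt μ Φ Ψ = condStatEnt μ Φ' Ψ' := by
  simp only [condStatEnt, hΦ.statEnt_eq]
  exact hΨ.sum_eq fun ψ => (∫ x, ψ x ∂μ) * statEnt (condMeas μ ψ) Φ'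

lemma statEnt_comp [MeasurableSpace Y] {ν : Measure Y} {S : Y → X}
    (hS : MeasurePreserving S ν μ) (hΦ : Φ.Meas) : statEnt ν (Φ.comp S) = statEnt μ Φ := by
  have key : ∀ g : X → ℝ, Measurable g → ∫ y, g (S y) ∂ν = ∫ x, g x ∂μ := fun g hg => by
    rw [← hS.map_eq, integral_map hS.measurable.aemeasurable hg.aestronglyMeasurable]
  simp only [statEnt, comp, key _ (hΦ _), key (fun x => Φ.f _ x * log (Φ.f _ x))
    ((hΦ _).mul (hΦ _).log)]
  rfl

lemma integral_entAt_join [IsFiniteMeasure μ] (hΦ : Φ.Meas) (hΨ : Ψ.Meas) :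
    ∫ x, (Φ.join Ψ).entAt x ∂μ = ∫ x, Φ.entAt x ∂μ + ∫ x, Ψ.entAt x ∂μ := by
  simp only [entAt_join]
  exact integral_add hΦ.integrable_entAt hΨ.integrable_entAt

lemma massEnt_join_join_add_le [IsFiniteMeasure μ] (hA : A.Meas) (hB : B.Meas) (hC : C.Meas) :
    massEnt μ (A.join (C.join B)) + massEnt μ C ≤ massEnt μ (A.join C) + massEnt μ (C.join B) := by
  have hmarg_r : ∀ i q, ∑ r, ∫ x, A.f i x * (C.f q x * B.f r x) ∂μ = ∫ x, A.f i x * C.f q x ∂μ :=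
    fun i q => by
      rw [← hB.sum_integral_mul (hA.integrable_mul i (hC.integrable q))]
      exact Finset.sum_congr rfl fun r _ => integral_congr_ae <| ae_of_all _ fun x => by ring
  have hmarg_i : ∀ q r, ∑ i, ∫ x, A.f i x * (C.f q x * B.f r x) ∂μ = ∫ x, C.f q x * B.f r x ∂μ :=
    fun q r => hA.sum_integral_mul (hC.integrable_mul q (hB.integrable r))
  have hmarg_ir : ∀ q, ∑ i, ∫ x, A.f i x * C.f q x ∂μ = ∫ x, C.f q x ∂μ :=
    fun q => hA.sum_integral_mul (hC.integrable q)
  have h := Real.strongSubadditive_sum_negMulLog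
    (fun i q r => ∫ x, A.f i x * (C.f q x * B.f r x) ∂μ) fun i q r =>
      integral_nonneg fun x => mul_nonneg (A.nonneg i x) (mul_nonneg (C.nonneg q x) (B.nonneg r x))
  simp only [hmarg_r, hmarg_i, hmarg_ir] at h
  rw [massEnt_join, massEnt_join, massEnt_join, massEnt]
  convert h using 2
  exact Finset.sum_congr rfl fun i _ => sum_join (fun g => negMulLog (∫ x, A.f i x * g x ∂μ)) C B

theorem statEnt_join_join_add_le [IsFiniteMeasure μ] (hA : A.Meas) (hB : B.Meas) (hC : C.Meas) :
    statEnt μ (A.join (C.join B)) + statEnt μ C ≤ statEnt μ (A.join C) + statEnt μ (C.join B) := by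
  rw [statEnt_eq_massEnt_sub_integral_entAt (hA.join (hC.join hB)),
    statEnt_eq_massEnt_sub_integral_entAt hC, statEnt_eq_massEnt_sub_integral_entAt (hA.join hC),
    statEnt_eq_massEnt_sub_integral_entAt (hC.join hB), integral_entAt_join hA (hC.join hB),
    integral_entAt_join hC hB, integral_entAt_join hA hC]
  linarith [massEnt_join_join_add_le (μ := μ) hA hB hC]

lemma statEnt_triv [IsProbabilityMeasure μ] : statEnt μ (triv X) = 0 := by
  simp [statEnt, triv]

theorem statEnt_join_le [IsProbabilityMeasure μ] (hΦ : Φ.Meas) (hΨ : Ψ.Meas) :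
    statEnt μ (Φ.join Ψ) ≤ statEnt μ Φ + statEnt μ Ψ := by
  have h := statEnt_join_join_add_le (μ := μ) hΦ hΨ meas_triv
  rwa [statEnt_triv, add_zero, ((Perm.refl Φ).join (perm_triv_join Ψ)).statEnt_eq,
    ((perm_join_comm Φ (triv X)).trans (perm_triv_join Φ)).statEnt_eq,
    (perm_triv_join Ψ).statEnt_eq] at h

theorem statEnt_nonneg [IsProbabilityMeasure μ] (hΦ : Φ.Meas) : 0 ≤ statEnt μ Φ := by
  rw [statEnt_eq_massEnt_sub_integral_entAt hΦ, massEnt]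
  simp only [entAt]
  rw [integral_finsetSum _ fun i _ => hΦ.integrable_negMulLog i, ← Finset.sum_sub_distrib]
  exact Finset.sum_nonneg fun i _ => sub_nonneg.2 <|
    concaveOn_negMulLog.le_map_integral continuous_negMulLog.continuousOn isClosed_Ici
      (ae_of_all _ (Φ.nonneg i)) (hΦ.integrable i) (hΦ.integrable_negMulLog i)

end StaticEntropy

section Conditional

open scoped ENNReal NNReal

variable [MeasurableSpace X] {μ : Measure X} {Φ Ψ A B C D : PartUnity X} {ψ : X → ℝ}

lemma integral_condMeas (hψ : Measurable ψ) (hψ0 : ∀ x, 0 ≤ ψ x) (g : X → ℝ) :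
    ∫ x, g x ∂(condMeas μ ψ) = (∫ x, ψ x ∂μ)⁻¹ * ∫ x, ψ x * g x ∂μ := by
  rw [condMeas, integral_smul_measure, smul_eq_mul, ENNReal.toReal_inv,
    ENNReal.toReal_ofReal (integral_nonneg hψ0)]
  congr 1
  change ∫ x, g x ∂μ.withDensity (fun x => ((ψ x).toNNReal : ℝ≥0∞)) = _
  rw [integral_withDensity_eq_integral_smul hψ.real_toNNReal]
  exact integral_congr_ae <| ae_of_all _ fun x => by
    dsimp only
    rw [NNReal.smul_def, Real.coe_toNNReal _ (hψ0 x), smul_eq_mul]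

lemma isProbabilityMeasure_condMeas (hψ : Integrable ψ μ) (hψ0 : ∀ x, 0 ≤ ψ x)
    (hpos : 0 < ∫ x, ψ x ∂μ) : IsProbabilityMeasure (condMeas μ ψ) := by
  constructor
  rw [condMeas, Measure.smul_apply, withDensity_apply _ MeasurableSet.univ, setLIntegral_univ,
    ← ofReal_integral_eq_lintegral_ofReal hψ (ae_of_all _ hψ0), smul_eq_mul]
  exact ENNReal.inv_mul_cancel (ENNReal.ofReal_pos.2 hpos).ne' ENNReal.ofReal_ne_top

lemma integral_mul_statEnt_condMeas [IsFiniteMeasure μ] (hΦ : Φ.Meas) (hψ : Measurable ψ)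
    (hψ0 : ∀ x, 0 ≤ ψ x) (hψ1 : ∀ x, ψ x ≤ 1) :
    (∫ x, ψ x ∂μ) * statEnt (condMeas μ ψ) Φ
      = ∑ i, negMulLog (∫ x, Φ.f i x * ψ x ∂μ) - negMulLog (∫ x, ψ x ∂μ)
        - ∫ x, ψ x * Φ.entAt x ∂μ := by
  have hψi : Integrable ψ μ := .of_bound hψ.aestronglyMeasurable 1 <| ae_of_all _ fun x => by
    rw [norm_of_nonneg (hψ0 x)]; exact hψ1 x
  have hent : ∫ x, ψ x * Φ.entAt x ∂μ = -∑ i, ∫ x, ψ x * (Φ.f i x * log (Φ.f i x)) ∂μ := by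
    simp only [entAt, Finset.mul_sum]
    rw [integral_finsetSum _ fun i _ => (hΦ.integrable_negMulLog i).bdd_mul (c := 1)
      hψ.aestronglyMeasurable (ae_of_all _ fun x => by rw [norm_of_nonneg (hψ0 x)]; exact hψ1 x),
      ← Finset.sum_neg_distrib]
    simp only [← integral_neg, negMulLog, neg_mul, mul_neg]
  have hc0 : 0 ≤ ∫ x, ψ x ∂μ := integral_nonneg hψ0
  rcases hc0.eq_or_lt with hc | hc
  · have hψae : ψ =ᵐ[μ] 0 := (integral_eq_zero_iff_of_nonneg hψ0 hψi).1 hc.symm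
    have hzero : ∀ g : X → ℝ, ∫ x, g x * ψ x ∂μ = 0 := fun g =>
      integral_eq_zero_of_ae <| by filter_upwards [hψae] with x hx; simp [hx]
    rw [← hc, hent]
    simp [hzero, mul_comm (ψ _)]
  set c := ∫ x, ψ x ∂μ with hc_def
  have hsum : ∑ i, ∫ x, Φ.f i x * ψ x ∂μ = c := hΦ.sum_integral_mul hψi
  calc c * statEnt (condMeas μ ψ) Φ
      = ∑ i, (c * negMulLog (c⁻¹ * ∫ x, Φ.f i x * ψ x ∂μ)
          + ∫ x, ψ x * (Φ.f i x * log (Φ.f i x)) ∂μ) := by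
        simp only [statEnt, integral_condMeas hψ hψ0, ← hc_def, Finset.mul_sum, negMulLog]
        refine Finset.sum_congr rfl fun i _ => ?_
        rw [mul_add, mul_inv_cancel_left₀ hc.ne', integral_congr_ae (g := fun x => Φ.f i x * ψ x)
          (ae_of_all _ fun x => mul_comm _ _)]
        ring
    _ = ∑ i, (negMulLog (∫ x, Φ.f i x * ψ x ∂μ) + (∫ x, Φ.f i x * ψ x ∂μ) * log c
          + ∫ x, ψ x * (Φ.f i x * log (Φ.f i x)) ∂μ) := by
        simp only [mul_negMulLog_inv_mul hc]
    _ = _ := by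
        rw [Finset.sum_add_distrib, Finset.sum_add_distrib, ← Finset.sum_mul, hsum, hent, negMulLog]
        ring

theorem condStatEnt_eq_statEnt_join_sub [IsFiniteMeasure μ] (hΦ : Φ.Meas) (hΨ : Ψ.Meas) :
    condStatEnt μ Φ Ψ = statEnt μ (Φ.join Ψ) - statEnt μ Ψ := by
  rw [condStatEnt, Finset.sum_congr rfl fun j _ =>
      integral_mul_statEnt_condMeas hΦ (hΨ j) (Ψ.nonneg j) (Ψ.le_one j),
    statEnt_eq_massEnt_sub_integral_entAt (hΦ.join hΨ), statEnt_eq_massEnt_sub_integral_entAt hΨ,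
    integral_entAt_join hΦ hΨ, massEnt_join, massEnt, Finset.sum_sub_distrib,
    Finset.sum_sub_distrib, hΨ.sum_integral_mul hΦ.integrable_entAt, Finset.sum_comm]
  ring

theorem condStatEnt_nonneg [IsProbabilityMeasure μ] (hΦ : Φ.Meas) (hΨ : Ψ.Meas) :
    0 ≤ condStatEnt μ Φ Ψ := by
  refine Finset.sum_nonneg fun j _ => ?_
  have hj : 0 ≤ ∫ x, Ψ.f j x ∂μ := integral_nonneg (Ψ.nonneg j)
  rcases hj.eq_or_lt with h | h
  · rw [← h, zero_mul]
  · have := isProbabilityMeasure_condMeas (hΨ.integrable j) (Ψ.nonneg j) h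
    exact mul_nonneg h.le (statEnt_nonneg hΦ)

theorem condStatEnt_join_le [IsFiniteMeasure μ] (hA : A.Meas) (hB : B.Meas) (hC : C.Meas)
    (hD : D.Meas) :
    condStatEnt μ (A.join B) (C.join D) ≤ condStatEnt μ A C + condStatEnt μ B D := by
  have h₁ := statEnt_join_join_add_le (μ := μ) hA hB (hC.join hD)
  have h₂ := statEnt_join_join_add_le (μ := μ) hA hD hC
  have h₃ := statEnt_join_join_add_le (μ := μ) hB hC hD
  have hCD : statEnt μ (D.join C) = statEnt μ (C.join D) := (perm_join_comm D C).statEnt_eq μ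
  rw [((Perm.refl A).join (perm_join_comm _ B)).statEnt_eq, ← (perm_join_assoc A B _).statEnt_eq,
    ((perm_join_comm _ B).trans ((Perm.refl B).join (perm_join_comm C D))).statEnt_eq] at h₁
  rw [condStatEnt_eq_statEnt_join_sub (hA.join hB) (hC.join hD),
    condStatEnt_eq_statEnt_join_sub hA hC, condStatEnt_eq_statEnt_join_sub hB hD]
  linarith

theorem condStatEnt_comp [MeasurableSpace Y] {ν : Measure Y} [IsFiniteMeasure μ] {S : Y → X}
    (hS : MeasurePreserving S ν μ) (hΦ : Φ.Meas) (hΨ : Ψ.Meas) :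
    condStatEnt ν (Φ.comp S) (Ψ.comp S) = condStatEnt μ Φ Ψ := by
  have : IsFiniteMeasure ν := ⟨by
    rw [← Set.preimage_univ (f := S), hS.measure_preimage MeasurableSet.univ.nullMeasurableSet]
    exact measure_lt_top μ _⟩
  rw [condStatEnt_eq_statEnt_join_sub (hΦ.comp hS.measurable) (hΨ.comp hS.measurable),
    condStatEnt_eq_statEnt_join_sub hΦ hΨ, ← join_comp, statEnt_comp hS (hΦ.join hΨ),
    statEnt_comp hS hΨ]

end Conditional

section Dynamics

variable [MeasurableSpace X] {μ : Measure X} {T : X → X} {Φ Ψ : PartUnity X}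

theorem subadditive_statEnt_dyn [IsProbabilityMeasure μ] (hμ : MeasurePreserving T μ μ)
    (hΦ : Φ.Meas) : Subadditive fun n => statEnt μ (dyn T Φ n) := fun n m => by
  have hT := hμ.measurable
  dsimp only
  rw [(perm_dyn_add T Φ n m).statEnt_eq, ← statEnt_comp (hμ.iterate n) (hΦ.dyn hT m)]
  exact statEnt_join_le (hΦ.dyn hT n) ((hΦ.dyn hT m).comp (hT.iterate n))

theorem subadditive_condStatEnt_dyn [IsFiniteMeasure μ] (hμ : MeasurePreserving T μ μ)
    (hΦ : Φ.Meas) (hΨ : Ψ.Meas) :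
    Subadditive fun n => condStatEnt μ (dyn T Φ n) (dyn T Ψ n) := fun n m => by
  have hT := hμ.measurable
  dsimp only
  rw [(perm_dyn_add T Φ n m).condStatEnt_eq (perm_dyn_add T Ψ n m),
    ← condStatEnt_comp (hμ.iterate n) (hΦ.dyn hT m) (hΨ.dyn hT m)]
  exact condStatEnt_join_le (hΦ.dyn hT n) ((hΦ.dyn hT m).comp (hT.iterate n)) (hΨ.dyn hT n)
    ((hΨ.dyn hT m).comp (hT.iterate n))

end Dynamics

lemma Subadditive.exists_tendsto_div_of_nonneg {u : ℕ → ℝ} (hu : Subadditive u)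
    (h0 : ∀ n, 0 ≤ u n) : ∃ L, Tendsto (fun n => u n / n) atTop (nhds L) :=
  ⟨hu.lim, hu.tendsto_lim ⟨0, by rintro _ ⟨n, rfl⟩; exact div_nonneg (h0 n) n.cast_nonneg⟩⟩

theorem statEnt_subadditive_and_limits_exist_general {X : Type*}
    [MeasurableSpace X]
    (T : X → X)
    (μ : Measure X) [IsProbabilityMeasure μ] (hμ : MeasurePreserving T μ μ)
    (Φ Ψ : PartUnity X) (hΦ : Φ.Meas) (hΨ : Ψ.Meas) :
    (∀ n m : ℕ, 1 ≤ n → 1 ≤ m →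
      statEnt μ (PartUnity.dyn T Φ (n + m)) ≤
        statEnt μ (PartUnity.dyn T Φ n) + statEnt μ (PartUnity.dyn T Φ m)) ∧
    (∀ n m : ℕ, 1 ≤ n → 1 ≤ m →
      condStatEnt μ (PartUnity.dyn T Φ (n + m)) (PartUnity.dyn T Ψ (n + m)) ≤
        condStatEnt μ (PartUnity.dyn T Φ n) (PartUnity.dyn T Ψ n) +
          condStatEnt μ (PartUnity.dyn T Φ m) (PartUnity.dyn T Ψ m)) ∧
    (∃ L : ℝ, Filter.Tendsto
      (fun n : ℕ => statEnt μ (PartUnity.dyn T Φ n) / (n : ℝ)) Filter.atTop (nhds L)) ∧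
    (∃ L : ℝ, Filter.Tendsto
      (fun n : ℕ => condStatEnt μ (PartUnity.dyn T Φ n) (PartUnity.dyn T Ψ n) / (n : ℝ))
      Filter.atTop (nhds L)) := by
  have hT := hμ.measurable
  have hH := subadditive_statEnt_dyn hμ hΦ
  have hHcond := subadditive_condStatEnt_dyn hμ hΦ hΨ
  exact ⟨fun n m _ _ => hH n m, fun n m _ _ => hHcond n m,
    hH.exists_tendsto_div_of_nonneg fun n => statEnt_nonneg (hΦ.dyn hT n),
    hHcond.exists_tendsto_div_of_nonneg fun n => condStatEnt_nonneg (hΦ.dyn hT n) (hΨ.dyn hT n)⟩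

/-- Subadditivity of the (conditional) static entropies along the
dynamical joins, and existence of the limits defining `h̃_μ(T,Φ)` and `h̃_μ(T,Φ|Ψ)`. -/
theorem statEnt_subadditive_and_limits_exist {X : Type*} [MetricSpace X] [CompactSpace X] [Nonempty X]
    [MeasurableSpace X] [BorelSpace X]
    (T : X → X) (hT : Continuous T) (hTsurj : Function.Surjective T)
    (μ : Measure X) [IsProbabilityMeasure μ] (hμ : MeasurePreserving T μ μ)
    (Φ Ψ : PartUnity X) (hΦ : Φ.Meas) (hΨ : Ψ.Meas) :
    (∀ n m : ℕ, 1 ≤ n → 1 ≤ m →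
      statEnt μ (PartUnity.dyn T Φ (n + m)) ≤
        statEnt μ (PartUnity.dyn T Φ n) + statEnt μ (PartUnity.dyn T Φ m)) ∧
    (∀ n m : ℕ, 1 ≤ n → 1 ≤ m →
      condStatEnt μ (PartUnity.dyn T Φ (n + m)) (PartUnity.dyn T Ψ (n + m)) ≤
        condStatEnt μ (PartUnity.dyn T Φ n) (PartUnity.dyn T Ψ n) +
          condStatEnt μ (PartUnity.dyn T Φ m) (PartUnity.dyn T Ψ m)) ∧
    (∃ L : ℝ, Filter.Tendsto
      (fun n : ℕ => statEnt μ (PartUnity.dyn T Φ n) / (n : ℝ)) Filter.atTop (nhds L)) ∧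
    (∃ L : ℝ, Filter.Tendsto
      (fun n : ℕ => condStatEnt μ (PartUnity.dyn T Φ n) (PartUnity.dyn T Ψ n) / (n : ℝ))
      Filter.atTop (nhds L)) :=
  statEnt_subadditive_and_limits_exist_general T μ hμ Φ Ψ hΦ hΨ
end

section
/- Let (X,T) be a topological dynamical system. For every T-invariant Borel probability measure μ on X, h̃_μ(T) ≥ h_μ(T), i.e. the supremum of h̃_μ(T,Φ) over continuous partitions of unity Φ is at least the Kolmogorov–Sinai entropy of (T,μ). -/
open MeasureTheory Filter Set

/-! ### Metric entropy via partitions of unity -/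

variable {X Y : Type*}

/-!
Approximate a finite Borel partition `𝒜 = {A_a}` by a continuous partition of unity
`Φ = {φ_b}` with the same index set such that `μ(1_{A_a} φ_b)` is tiny for `a ≠ b`. Reading
`H̃_μ(Φ)` as the mutual information between a point `x ~ μ` and a label `b` drawn with probability
`φ_b(x)`, the data processing inequality gives
`H_μ(𝒜₀ⁿ⁻¹) ≤ H̃_μ(Φ₀ⁿ⁻¹) + H(𝒜₀ⁿ⁻¹ | Φ₀ⁿ⁻¹)`. Conditional entropy is subadditive over the `n`
coordinates and, by invariance of `μ`, each coordinate contributes the one-step term `H(𝒜 | Φ)`.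
Hence `h_μ(T, 𝒜) ≤ h̃_μ(T, Φ) + H(𝒜 | Φ)`, and `H(𝒜 | Φ)` is as small as we like.
-/

open Real Finset Topology

theorem mul_log_sub_mul_log_le {x y : ℝ} (hx : 0 ≤ x) (hxy : x ≤ y) :
    y * log y - x * log x ≤ (y - x) * (1 + log y) := by
  rcases hx.eq_or_lt with rfl | hx
  · simp only [sub_zero, zero_mul]
    linarith
  have hy := hx.trans_le hxy
  have h := mul_le_mul_of_nonneg_left (log_le_sub_one_of_pos (div_pos hy hx)) hx.le
  have hxy' : x * (y / x - 1) = y - x := by field_simp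
  rw [log_div hy.ne' hx.ne', hxy'] at h
  nlinarith

theorem sum_mul_log_le_sum_mul_log {γ : Type*} [Fintype γ] {r u : γ → ℝ} (hr : ∀ c, 0 ≤ r c)
    (hu0 : ∀ c, 0 ≤ u c) (hu : ∀ c, 0 < r c → 0 < u c) (hsum : ∑ c, u c ≤ ∑ c, r c) :
    ∑ c, r c * log (u c) ≤ ∑ c, r c * log (r c) := by
  have hterm : ∀ c, r c * log (u c) ≤ r c * log (r c) + (u c - r c) := by
    intro c
    rcases (hr c).eq_or_lt with h | h
    · simp [← h, hu0 c]
    · have hl := log_le_sub_one_of_pos (div_pos (hu c h) h)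
      rw [log_div (hu c h).ne' h.ne'] at hl
      have := mul_le_mul_of_nonneg_left hl h.le
      rw [mul_sub, mul_sub, mul_div_cancel₀ _ h.ne', mul_one] at this
      linarith
  calc ∑ c, r c * log (u c) ≤ ∑ c, (r c * log (r c) + (u c - r c)) := sum_le_sum fun c _ => hterm c
    _ ≤ ∑ c, r c * log (r c) := by
      rw [sum_add_distrib, sum_sub_distrib]
      linarith

theorem sum_negMulLog_le_log_card {γ : Type*} [Fintype γ] {q : γ → ℝ} (hq : ∀ c, 0 ≤ q c)
    (hq1 : ∑ c, q c = 1) : ∑ c, negMulLog (q c) ≤ log (Fintype.card γ) := by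
  have hN : (0 : ℝ) < Fintype.card γ := by
    rcases isEmpty_or_nonempty γ with h | h
    · simp at hq1
    · exact_mod_cast Fintype.card_pos
  have h := concaveOn_negMulLog.le_map_sum (t := univ) (w := fun _ => (Fintype.card γ : ℝ)⁻¹)
    (p := q) (fun _ _ => by positivity) (by simp [hN.ne']) fun c _ => Set.mem_Ici.2 (hq c)
  simp only [smul_eq_mul, ← mul_sum, hq1, mul_one, negMulLog, log_inv] at h
  rw [← mul_le_mul_iff_of_pos_left (inv_pos.2 hN)]
  simpa [negMulLog, mul_sum] using h

theorem le_one_of_sum_eq_one {γ : Type*} [Fintype γ] {f : γ → ℝ} (h0 : ∀ c, 0 ≤ f c)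
    (h1 : ∑ c, f c = 1) (c : γ) : f c ≤ 1 :=
  h1 ▸ single_le_sum (fun c' _ => h0 c') (mem_univ c)

theorem limsup_le_limsup_add_const {γ : Type*} {l : Filter γ} [l.NeBot] {u v : γ → ℝ} {c : ℝ}
    (h : ∀ᶠ n in l, u n ≤ v n + c) (hu : IsBoundedUnder (· ≥ ·) l u)
    (hv : IsBoundedUnder (· ≤ ·) l v) : limsup u l ≤ limsup v l + c := by
  obtain ⟨b, hb⟩ := hu
  obtain ⟨B, hB⟩ := hv
  have hv' : IsBoundedUnder (· ≥ ·) l v := isBoundedUnder_of_eventually_ge (a := b - c) <|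
    ((eventually_map.1 hb).and h).mono fun n hn => by linarith [hn.1, hn.2]
  rw [← limsup_add_const l v c ⟨B, hB⟩ hv'.isCoboundedUnder_le]
  exact limsup_le_limsup h (IsBoundedUnder.isCoboundedUnder_le ⟨b, hb⟩) <|
    isBoundedUnder_of_eventually_le (a := B + c)
      ((eventually_map.1 hB).mono fun n hn => by linarith)

section FiniteEntropy

variable {ι α β : Type*} [Fintype ι] [DecidableEq ι] [Fintype α] [Fintype β]

/-- `H(A | B) = H(A, B) - H(B)` for a finite joint weight `r a b`. -/
noncomputable def condEntropy (r : α → β → ℝ) : ℝ :=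
  ∑ a, ∑ b, negMulLog (r a b) - ∑ b, negMulLog (∑ a, r a b)

def marginal [DecidableEq α] [DecidableEq β] (i : ι) (r : (ι → α) → (ι → β) → ℝ)
    (a : α) (b : β) : ℝ :=
  ∑ σ with σ i = a, ∑ τ with τ i = b, r σ τ

theorem sum_sum_mul_eq_sum_sum_marginal_mul [DecidableEq α] [DecidableEq β] (i : ι)
    (r : (ι → α) → (ι → β) → ℝ) (g : α → β → ℝ) :
    ∑ σ, ∑ τ, r σ τ * g (σ i) (τ i) = ∑ a, ∑ b, marginal i r a b * g a b := by
  simp only [marginal, sum_mul]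
  rw [← sum_fiberwise univ (fun σ : ι → α => σ i) (fun σ => ∑ τ, r σ τ * g (σ i) (τ i))]
  refine sum_congr rfl fun a _ => ?_
  conv_rhs => rw [sum_comm]
  refine sum_congr rfl fun σ hσ => ?_
  rw [← sum_fiberwise univ (fun τ : ι → β => τ i) (fun τ => r σ τ * g (σ i) (τ i))]
  refine sum_congr rfl fun b _ => sum_congr rfl fun τ hτ => ?_
  rw [(mem_filter.1 hσ).2, (mem_filter.1 hτ).2]

theorem le_marginal [DecidableEq α] [DecidableEq β] {r : (ι → α) → (ι → β) → ℝ}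
    (hr : ∀ σ τ, 0 ≤ r σ τ) (i : ι) (σ : ι → α) (τ : ι → β) :
    r σ τ ≤ marginal i r (σ i) (τ i) :=
  calc r σ τ ≤ ∑ τ' with τ' i = τ i, r σ τ' :=
        single_le_sum (fun τ' _ => hr σ τ') (by simp)
    _ ≤ marginal i r (σ i) (τ i) :=
        single_le_sum (f := fun σ' => ∑ τ' with τ' i = τ i, r σ' τ')
          (fun σ' _ => sum_nonneg fun τ' _ => hr σ' τ') (by simp)

theorem sum_prod_div_sum_le_one {m : ι → α → ℝ} (hm : ∀ i a, 0 ≤ m i a) :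
    ∑ σ : ι → α, ∏ i, m i (σ i) / ∑ a, m i a ≤ 1 := by
  rw [← Fintype.prod_sum fun i a => m i a / ∑ a', m i a']
  refine prod_le_one (fun i _ => sum_nonneg fun a _ => div_nonneg (hm i a)
    (sum_nonneg fun a _ => hm i a)) fun i _ => ?_
  rw [← sum_div]
  exact div_le_one_of_le₀ le_rfl (sum_nonneg fun a _ => hm i a)

theorem sum_sum_mul_log_marginal_sub_log_eq [DecidableEq α] [DecidableEq β] (i : ι)
    (r : (ι → α) → (ι → β) → ℝ) :
    ∑ σ, ∑ τ, r σ τ * (log (marginal i r (σ i) (τ i)) - log (∑ a, marginal i r a (τ i))) =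
      -condEntropy (marginal i r) := by
  rw [sum_sum_mul_eq_sum_sum_marginal_mul i r fun a b =>
    log (marginal i r a b) - log (∑ a, marginal i r a b)]
  simp only [condEntropy, negMulLog, mul_sub, sum_sub_distrib, neg_mul, sum_neg_distrib]
  rw [sum_comm (f := fun a b => marginal i r a b * log (∑ a, marginal i r a b))]
  simp only [← sum_mul]
  ring

theorem condEntropy_le_sum_condEntropy_marginal [DecidableEq α] [DecidableEq β]
    {r : (ι → α) → (ι → β) → ℝ} (hr : ∀ σ τ, 0 ≤ r σ τ) :
    condEntropy r ≤ ∑ i, condEntropy (marginal i r) := by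
  set q : (ι → β) → ℝ := fun τ => ∑ σ, r σ τ with hq
  set w : ι → β → ℝ := fun i b => ∑ a, marginal i r a b
  -- Gibbs' inequality against the kernel `q τ * ∏ i, P(σ i | τ i)`, whose total mass is `≤ ∑ q`.
  set u : (ι → α) → (ι → β) → ℝ :=
    fun σ τ => q τ * ∏ i, marginal i r (σ i) (τ i) / w i (τ i) with hu
  have hm0 : ∀ i a b, 0 ≤ marginal i r a b := fun i a b =>
    sum_nonneg fun σ _ => sum_nonneg fun τ _ => hr σ τ
  have hw0 : ∀ i b, 0 ≤ w i b := fun i b => sum_nonneg fun a _ => hm0 i a b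
  have hmw : ∀ i a b, marginal i r a b ≤ w i b := fun i a b =>
    single_le_sum (fun a' _ => hm0 i a' b) (mem_univ a)
  have hrq : ∀ σ τ, r σ τ ≤ q τ := fun σ τ => single_le_sum (fun σ' _ => hr σ' τ) (mem_univ σ)
  have hq0 : ∀ τ, 0 ≤ q τ := fun τ => sum_nonneg fun σ _ => hr σ τ
  have hu0 : ∀ σ τ, 0 ≤ u σ τ := fun σ τ =>
    mul_nonneg (hq0 τ) (prod_nonneg fun i _ => div_nonneg (hm0 ..) (hw0 ..))
  have hpos : ∀ σ τ, 0 < r σ τ → 0 < q τ ∧ ∀ i, 0 < marginal i r (σ i) (τ i) ∧ 0 < w i (τ i) :=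
    fun σ τ h => ⟨h.trans_le (hrq σ τ), fun i =>
      ⟨h.trans_le (le_marginal hr i σ τ), h.trans_le ((le_marginal hr i σ τ).trans (hmw ..))⟩⟩
  have hupos : ∀ σ τ, 0 < r σ τ → 0 < u σ τ := fun σ τ h =>
    mul_pos (hpos σ τ h).1 (prod_pos fun i _ => div_pos ((hpos σ τ h).2 i).1 ((hpos σ τ h).2 i).2)
  have husum : ∀ τ, ∑ σ, u σ τ ≤ ∑ σ, r σ τ := by
    intro τ
    have h := mul_le_of_le_one_right (hq0 τ) (sum_prod_div_sum_le_one fun i a => hm0 i a (τ i))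
    rw [mul_sum] at h
    exact h
  have hgibbs : ∑ τ, ∑ σ, r σ τ * log (u σ τ) ≤ ∑ τ, ∑ σ, r σ τ * log (r σ τ) :=
    sum_le_sum fun τ _ => sum_mul_log_le_sum_mul_log (fun σ => hr σ τ) (fun σ => hu0 σ τ)
      (fun σ => hupos σ τ) (husum τ)
  have hlog : ∀ σ τ, r σ τ * log (u σ τ) = r σ τ * log (q τ) +
      ∑ i, r σ τ * (log (marginal i r (σ i) (τ i)) - log (w i (τ i))) := by
    intro σ τ
    rcases (hr σ τ).eq_or_lt with h | h
    · simp [← h]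
    · obtain ⟨hq, hmw⟩ := hpos σ τ h
      rw [hu, log_mul hq.ne' (prod_pos fun i _ => div_pos (hmw i).1 (hmw i).2).ne',
        log_prod fun i _ => (div_pos (hmw i).1 (hmw i).2).ne', mul_add, mul_sum]
      simp only [log_div (hmw _).1.ne' (hmw _).2.ne']
  have hexp : ∑ τ, ∑ σ, r σ τ * log (u σ τ) =
      -∑ τ, negMulLog (q τ) - ∑ i, condEntropy (marginal i r) := by
    have hswap : ∑ τ, ∑ σ, ∑ i, r σ τ * (log (marginal i r (σ i) (τ i)) - log (w i (τ i))) =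
        ∑ i, ∑ σ, ∑ τ, r σ τ * (log (marginal i r (σ i) (τ i)) - log (w i (τ i))) :=
      sum_comm.trans ((sum_congr rfl fun σ _ => sum_comm).trans sum_comm)
    have hmarg : ∀ i, ∑ σ, ∑ τ, r σ τ * (log (marginal i r (σ i) (τ i)) - log (w i (τ i))) =
        -condEntropy (marginal i r) := fun i => sum_sum_mul_log_marginal_sub_log_eq i r
    simp only [hlog, sum_add_distrib, hswap, hmarg, sum_neg_distrib]
    rw [sum_congr rfl fun τ _ => (sum_mul ..).symm]
    simp only [negMulLog, neg_mul, sum_neg_distrib, neg_neg, hq]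
    ring
  have hent : ∑ τ, ∑ σ, r σ τ * log (r σ τ) = -∑ σ, ∑ τ, negMulLog (r σ τ) := by
    rw [sum_comm]
    simp only [negMulLog, neg_mul, sum_neg_distrib, neg_neg]
  rw [condEntropy]
  linarith

theorem condEntropy_le_of_offDiag_le {m : α → α → ℝ} (hm : ∀ a b, 0 ≤ m a b)
    (hcol : ∀ b, ∑ a, m a b ≤ 1) {ε : ℝ} (hε : 0 ≤ ε) (hεe : ε ≤ exp (-1))
    (hoff : ∀ a b, a ≠ b → m a b ≤ ε) :
    condEntropy m ≤ Fintype.card α ^ 2 * (ε + negMulLog ε) := by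
  classical
  have hε1 : ε ≤ 1 := hεe.trans (exp_le_one_iff.2 (by norm_num))
  have hcolumn : ∀ b, ∑ a, negMulLog (m a b) - negMulLog (∑ a, m a b) ≤
      Fintype.card α * (ε + negMulLog ε) := by
    intro b
    have hsplit : ∀ f : α → ℝ, ∑ a, f a = f b + ∑ a ∈ univ.erase b, f a := fun f =>
      (add_sum_erase _ _ (mem_univ b)).symm
    have hdiag : negMulLog (m b b) ≤ negMulLog (∑ a, m a b) + ∑ a ∈ univ.erase b, m a b := by
      have h := mul_log_sub_mul_log_le (hm b b) (single_le_sum (fun a _ => hm a b) (mem_univ b))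
      have hlog : log (∑ a, m a b) ≤ 0 := log_nonpos (sum_nonneg fun a _ => hm a b) (hcol b)
      rw [hsplit fun a => m a b] at h hlog ⊢
      simp only [negMulLog, neg_mul]
      nlinarith [sum_nonneg fun a (_ : a ∈ univ.erase b) => hm a b]
    have hoffdiag : ∀ a ∈ univ.erase b, m a b + negMulLog (m a b) ≤ ε + negMulLog ε := by
      intro a ha
      have hab := hoff a b (ne_of_mem_erase ha)
      rcases (hm a b).eq_or_lt with h0 | hpos
      · rw [← h0, negMulLog_zero, add_zero]
        exact add_nonneg hε (negMulLog_nonneg hε hε1)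
      have h := mul_log_sub_mul_log_le (hm a b) hab
      have hlog : 1 + log ε ≤ 0 := by
        linarith [(log_le_log (hpos.trans_le hab) hεe).trans_eq (log_exp (-1))]
      simp only [negMulLog, neg_mul]
      nlinarith [hm a b]
    calc ∑ a, negMulLog (m a b) - negMulLog (∑ a, m a b)
        ≤ ∑ a ∈ univ.erase b, (m a b + negMulLog (m a b)) := by
          rw [hsplit fun a => negMulLog (m a b), sum_add_distrib]; linarith
      _ ≤ ∑ _a ∈ univ.erase b, (ε + negMulLog ε) := sum_le_sum hoffdiag
      _ ≤ Fintype.card α * (ε + negMulLog ε) := by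
          rw [sum_const, nsmul_eq_mul]
          exact mul_le_mul_of_nonneg_right (by exact_mod_cast card_le_univ _)
            (add_nonneg hε (negMulLog_nonneg hε hε1))
  calc condEntropy m = ∑ b, (∑ a, negMulLog (m a b) - negMulLog (∑ a, m a b)) := by
        rw [condEntropy, sum_comm, sum_sub_distrib]
    _ ≤ ∑ _b : α, Fintype.card α * (ε + negMulLog ε) := sum_le_sum fun b _ => hcolumn b
    _ = Fintype.card α ^ 2 * (ε + negMulLog ε) := by
        rw [sum_const, card_univ, nsmul_eq_mul]; ring

end FiniteEntropy

section Jensen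

variable [MeasurableSpace X] {μ : Measure X} {ι κ : Type*} [Fintype ι] [Fintype κ]

theorem integrable_of_nonneg_of_le_one [IsFiniteMeasure μ] {f : X → ℝ} (hf : Measurable f)
    (h0 : ∀ x, 0 ≤ f x) (h1 : ∀ x, f x ≤ 1) : Integrable f μ :=
  .of_bound hf.aestronglyMeasurable 1 (ae_of_all _ fun x => by
    rw [Real.norm_of_nonneg (h0 x)]; exact h1 x)

theorem integrable_negMulLog_comp [IsFiniteMeasure μ] {f : X → ℝ} (hf : Measurable f)
    (h0 : ∀ x, 0 ≤ f x) (h1 : ∀ x, f x ≤ 1) : Integrable (fun x => negMulLog (f x)) μ :=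
  integrable_of_nonneg_of_le_one (continuous_negMulLog.measurable.comp hf)
    (fun x => negMulLog_nonneg (h0 x) (h1 x))
    (fun x => (negMulLog_le_one_sub_self (h0 x)).trans (by linarith [h0 x]))

theorem integral_eq_sum_setIntegral {C : κ → Set X} (hC : ∀ σ, MeasurableSet (C σ))
    (hCsum : ∀ x, ∑ σ, (C σ).indicator (1 : X → ℝ) x = 1) {f : X → ℝ} (hf : Integrable f μ) :
    ∫ x, f x ∂μ = ∑ σ, ∫ x in C σ, f x ∂μ := by
  simp only [← integral_indicator (hC _)]
  rw [← integral_finsetSum _ fun σ _ => hf.indicator (hC σ)]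
  congr 1 with x
  rw [← one_mul (f x), ← hCsum x, sum_mul]
  refine sum_congr rfl fun σ _ => ?_
  by_cases hx : x ∈ C σ <;> simp [hx]

/-- Jensen for the concave `η = negMulLog` on the cell `C`: with `r τ = ∫_C G τ`,
`∫_C η ∘ G τ ≤ μ(C) η(r τ / μ(C)) = η(r τ) - (r τ / μ(C)) η(μ(C))`, and `∑ τ, r τ = μ(C)`. -/
theorem negMulLog_measureReal_add_sum_setIntegral_le [IsFiniteMeasure μ] (C : Set X)
    {G : ι → X → ℝ} (hGm : ∀ τ, Measurable (G τ)) (hG0 : ∀ τ x, 0 ≤ G τ x)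
    (hGsum : ∀ x, ∑ τ, G τ x = 1) :
    negMulLog (μ.real C) + ∑ τ, ∫ x in C, negMulLog (G τ x) ∂μ ≤
      ∑ τ, negMulLog (∫ x in C, G τ x ∂μ) := by
  have hG1 : ∀ τ x, G τ x ≤ 1 := fun τ x => le_one_of_sum_eq_one (hG0 · x) (hGsum x) τ
  rcases eq_or_ne (μ C) 0 with h0 | h0
  · simp [Measure.restrict_eq_zero.2 h0, measureReal_def, h0]
  have hp : 0 < μ.real C := ENNReal.toReal_pos h0 (measure_ne_top μ C)
  have : NeZero (μ.restrict C) := ⟨by simpa [Measure.restrict_eq_zero] using h0⟩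
  have hjensen : ∀ τ, ∫ x in C, negMulLog (G τ x) ∂μ ≤
      μ.real C * negMulLog ((∫ x in C, G τ x ∂μ) / μ.real C) := by
    intro τ
    have h := concaveOn_negMulLog.le_map_average (μ := μ.restrict C)
      continuous_negMulLog.continuousOn isClosed_Ici
      (ae_of_all _ fun x => hG0 τ x) (integrable_of_nonneg_of_le_one (hGm τ) (hG0 τ) (hG1 τ))
      (integrable_negMulLog_comp (hGm τ) (hG0 τ) (hG1 τ))
    rw [setAverage_eq, setAverage_eq, smul_eq_mul, smul_eq_mul, ← div_eq_inv_mul,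
      ← div_eq_inv_mul, div_le_iff₀' hp] at h
    exact h
  have hsum : ∑ τ, ∫ x in C, G τ x ∂μ = μ.real C := by
    rw [← integral_finsetSum _ fun τ _ =>
      (integrable_of_nonneg_of_le_one (hGm τ) (hG0 τ) (hG1 τ)).integrableOn]
    simp [hGsum]
  have hsplit : ∀ τ, μ.real C * negMulLog ((∫ x in C, G τ x ∂μ) / μ.real C) =
      negMulLog (∫ x in C, G τ x ∂μ) - (∫ x in C, G τ x ∂μ) / μ.real C * negMulLog (μ.real C) := by
    intro τ
    have h := negMulLog_mul (μ.real C) ((∫ x in C, G τ x ∂μ) / μ.real C)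
    rw [mul_div_cancel₀ _ hp.ne'] at h
    linarith
  calc negMulLog (μ.real C) + ∑ τ, ∫ x in C, negMulLog (G τ x) ∂μ
      ≤ negMulLog (μ.real C) + ∑ τ, (negMulLog (∫ x in C, G τ x ∂μ) -
          (∫ x in C, G τ x ∂μ) / μ.real C * negMulLog (μ.real C)) :=
        by gcongr with τ; exact (hjensen τ).trans_eq (hsplit τ)
    _ = ∑ τ, negMulLog (∫ x in C, G τ x ∂μ) := by
        rw [sum_sub_distrib, ← sum_mul, ← sum_div, hsum, div_self hp.ne']
        ring

/-- Data processing inequality: `H_μ(C) ≤ H̃_μ(G) + H(C | G)`. -/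
theorem sum_negMulLog_measureReal_le [IsFiniteMeasure μ] {C : κ → Set X}
    (hC : ∀ σ, MeasurableSet (C σ))
    (hCsum : ∀ x, ∑ σ, (C σ).indicator (1 : X → ℝ) x = 1) {G : ι → X → ℝ}
    (hGm : ∀ τ, Measurable (G τ)) (hG0 : ∀ τ x, 0 ≤ G τ x) (hGsum : ∀ x, ∑ τ, G τ x = 1) :
    ∑ σ, negMulLog (μ.real (C σ)) ≤
      ∑ τ, (negMulLog (∫ x, G τ x ∂μ) - ∫ x, negMulLog (G τ x) ∂μ) +
        condEntropy (fun σ τ => ∫ x in C σ, G τ x ∂μ) := by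
  have hG1 : ∀ τ x, G τ x ≤ 1 := fun τ x => le_one_of_sum_eq_one (hG0 · x) (hGsum x) τ
  have hsplit : ∀ τ, ∫ x, G τ x ∂μ = ∑ σ, ∫ x in C σ, G τ x ∂μ := fun τ =>
    integral_eq_sum_setIntegral hC hCsum (integrable_of_nonneg_of_le_one (hGm τ) (hG0 τ) (hG1 τ))
  have hsplit' : ∀ τ, ∫ x, negMulLog (G τ x) ∂μ = ∑ σ, ∫ x in C σ, negMulLog (G τ x) ∂μ :=
    fun τ => integral_eq_sum_setIntegral hC hCsum
      (integrable_negMulLog_comp (hGm τ) (hG0 τ) (hG1 τ))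
  have hcells := sum_le_sum fun σ (_ : σ ∈ Finset.univ) =>
    negMulLog_measureReal_add_sum_setIntegral_le (μ := μ) (C σ) hGm hG0 hGsum
  rw [sum_add_distrib, sum_comm] at hcells
  simp only [← hsplit'] at hcells
  simp only [condEntropy, sum_sub_distrib, ← hsplit]
  linarith

theorem sum_negMulLog_integral_sub_le_log_card [IsProbabilityMeasure μ] {G : ι → X → ℝ}
    (hGm : ∀ τ, Measurable (G τ)) (hG0 : ∀ τ x, 0 ≤ G τ x) (hGsum : ∀ x, ∑ τ, G τ x = 1) :
    ∑ τ, (negMulLog (∫ x, G τ x ∂μ) - ∫ x, negMulLog (G τ x) ∂μ) ≤ log (Fintype.card ι) := by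
  have hG1 : ∀ τ x, G τ x ≤ 1 := fun τ x => le_one_of_sum_eq_one (hG0 · x) (hGsum x) τ
  have hmass : ∑ τ, ∫ x, G τ x ∂μ = 1 := by
    rw [← integral_finsetSum _ fun τ _ => integrable_of_nonneg_of_le_one (hGm τ) (hG0 τ) (hG1 τ)]
    simp [hGsum]
  calc ∑ τ, (negMulLog (∫ x, G τ x ∂μ) - ∫ x, negMulLog (G τ x) ∂μ)
      ≤ ∑ τ, negMulLog (∫ x, G τ x ∂μ) := sum_le_sum fun τ _ => sub_le_self _
        (integral_nonneg fun x => negMulLog_nonneg (hG0 τ x) (hG1 τ x))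
    _ ≤ log (Fintype.card ι) :=
        sum_negMulLog_le_log_card (fun τ => integral_nonneg (hG0 τ)) hmass
end Jensen

section DynamicalProduct

variable {α : Type*}

/-- The member `∏_{j<n} φ_{τ j} ∘ Tʲ` of the dynamical join `⋁_{j<n} T^{-j}φ`. -/
def dynProd (T : X → X) (φ : α → X → ℝ) (n : ℕ) (τ : Fin n → α) (x : X) : ℝ :=
  ∏ j, φ (τ j) (T^[j] x)

theorem dynProd_cons (T : X → X) (φ : α → X → ℝ) (n : ℕ) (a : α) (τ : Fin n → α) (x : X) :
    dynProd T φ (n + 1) (Fin.cons a τ) x = φ a x * dynProd T φ n τ (T x) := by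
  simp only [dynProd, Fin.prod_univ_succ, Fin.cons_zero, Fin.cons_succ, Fin.val_zero,
    Function.iterate_zero_apply, Fin.val_succ, Function.iterate_succ_apply]

theorem dynProd_nonneg (T : X → X) {φ : α → X → ℝ} (hφ : ∀ a x, 0 ≤ φ a x) (n : ℕ)
    (τ : Fin n → α) (x : X) : 0 ≤ dynProd T φ n τ x :=
  prod_nonneg fun _ _ => hφ _ _

theorem measurable_dynProd [MeasurableSpace X] {T : X → X} (hT : Measurable T)
    {φ : α → X → ℝ} (hφ : ∀ a, Measurable (φ a)) (n : ℕ) (τ : Fin n → α) :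
    Measurable (dynProd T φ n τ) :=
  Finset.measurable_prod _ fun j _ => (hφ (τ j)).comp (hT.iterate j)

theorem sum_dynProd [Fintype α] (T : X → X) {φ : α → X → ℝ} (hφ : ∀ x, ∑ a, φ a x = 1)
    (n : ℕ) (x : X) :
    ∑ τ, dynProd T φ n τ x = 1 := by
  simp only [dynProd]
  rw [← Fintype.prod_sum fun (j : Fin n) a => φ a (T^[j] x)]
  simp [hφ]

theorem sum_filter_dynProd [Fintype α] [DecidableEq α] (T : X → X) {φ : α → X → ℝ}
    (hφ : ∀ x, ∑ a, φ a x = 1) {n : ℕ} (i : Fin n) (b : α) (x : X) :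
    ∑ τ with τ i = b, dynProd T φ n τ x = φ b (T^[i] x) := by
  have hfilter : univ.filter (fun τ : Fin n → α => τ i = b) =
      Fintype.piFinset fun j => if j = i then {b} else univ := by
    ext τ
    simp only [mem_filter, Fintype.mem_piFinset]
    refine ⟨fun h j => ?_, fun h => by simpa using h i⟩
    split_ifs with hj
    · simp [hj, h]
    · exact mem_univ _
  rw [hfilter]
  simp only [dynProd]
  rw [← prod_univ_sum (fun j => if j = i then {b} else univ) fun (j : Fin n) a => φ a (T^[j] x),
    prod_eq_single i (fun j _ hj => by simp [hj, hφ]) (by simp)]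
  simp

theorem indicator_dynSet_one {m : ℕ} (T : X → X) (U : Fin m → Set X) (n : ℕ)
    (σ : Fin n → Fin m) (x : X) :
    (dynSet T U n σ).indicator 1 x = dynProd T (fun a => (U a).indicator 1) n σ x := by
  classical
  simp only [dynSet, dynProd, Set.indicator_apply, Set.mem_iInter, Set.mem_preimage, Pi.one_apply]
  split_ifs with h
  · exact (prod_eq_one fun j _ => if_pos (h j)).symm
  · obtain ⟨j, hj⟩ := not_forall.1 h
    exact (prod_eq_zero (mem_univ j) (if_neg hj)).symm

theorem sum_dyn_eq_sum_dynProd {M : Type*} [AddCommMonoid M] (T : X → X) (Φ : PartUnity X)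
    (F : (X → ℝ) → M) (n : ℕ) :
    ∑ k, F ((Φ.dyn T n).f k) = ∑ τ : Fin n → Fin Φ.n, F (dynProd T Φ.f n τ) := by
  induction n generalizing F with
  | zero =>
    change ∑ _k : Fin 1, F (fun _ => 1) = _
    rw [Fintype.sum_unique, Fintype.sum_unique]
    exact congrArg F (funext fun x => by simp [dynProd])
  | succ n ih =>
    have hjoin : ∑ k, F ((Φ.dyn T (n + 1)).f k) = ∑ p : Fin Φ.n × Fin (Φ.dyn T n).n,
        F (fun x => Φ.f p.1 x * (Φ.dyn T n).f p.2 (T x)) :=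
      Fintype.sum_equiv finProdFinEquiv.symm _ _ fun k => rfl
    rw [hjoin, ← (Fin.consEquiv fun _ : Fin (n + 1) => Fin Φ.n).sum_comp, Fintype.sum_prod_type,
      Fintype.sum_prod_type]
    refine sum_congr rfl fun a _ => ?_
    rw [ih fun h => F fun x => Φ.f a x * h (T x)]
    refine sum_congr rfl fun τ _ => congrArg F (funext fun x => ?_)
    exact (dynProd_cons T Φ.f n a τ x).symm
end DynamicalProduct

section KolmogorovSinai

variable [MeasurableSpace X] {μ : Measure X}

theorem statEnt_eq_sum (μ : Measure X) (Φ : PartUnity X) :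
    statEnt μ Φ = ∑ i, (negMulLog (∫ x, Φ.f i x ∂μ) - ∫ x, negMulLog (Φ.f i x) ∂μ) := by
  simp only [statEnt, negMulLog, neg_mul, integral_neg, sub_neg_eq_add]

theorem statEnt_dyn (μ : Measure X) (T : X → X) (Φ : PartUnity X) (n : ℕ) :
    statEnt μ (Φ.dyn T n) = ∑ τ : Fin n → Fin Φ.n,
      (negMulLog (∫ x, dynProd T Φ.f n τ x ∂μ) - ∫ x, negMulLog (dynProd T Φ.f n τ x) ∂μ) := by
  rw [statEnt_eq_sum]
  exact sum_dyn_eq_sum_dynProd T Φ (fun h => negMulLog (∫ x, h x ∂μ) - ∫ x, negMulLog (h x) ∂μ) n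

theorem FinBorelPart.sum_indicator_one (P : FinBorelPart X) (x : X) :
    ∑ a, (P.A a).indicator (1 : X → ℝ) x = 1 := by
  classical
  obtain ⟨a, ha⟩ := Set.mem_iUnion.1 (P.cover ▸ Set.mem_univ x)
  rw [sum_eq_single a (fun b _ hba => Set.indicator_of_notMem
    (Set.disjoint_left.1 (P.disj a b hba.symm) ha) _) (by simp)]
  simp [ha]

theorem sum_indicator_dynSet_one (P : FinBorelPart X) (T : X → X) (n : ℕ) (x : X) :
    ∑ σ, (dynSet T P.A n σ).indicator (1 : X → ℝ) x = 1 := by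
  simp only [indicator_dynSet_one]
  exact sum_dynProd T P.sum_indicator_one n x

theorem measurableSet_dynSet {m : ℕ} {T : X → X} (hT : Measurable T) {U : Fin m → Set X}
    (hU : ∀ a, MeasurableSet (U a)) (n : ℕ) (σ : Fin n → Fin m) :
    MeasurableSet (dynSet T U n σ) :=
  MeasurableSet.iInter fun j => hT.iterate j (hU (σ j))

theorem marginal_dynSet [IsFiniteMeasure μ] {T : X → X} (hT : MeasurePreserving T μ μ)
    (P : FinBorelPart X) {Φ : PartUnity X} (hΦ : Φ.Meas) {n : ℕ} (i : Fin n) :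
    marginal i (fun σ τ => ∫ x in dynSet T P.A n σ, dynProd T Φ.f n τ x ∂μ) =
      fun a b => ∫ x in P.A a, Φ.f b x ∂μ := by
  funext a b
  set χ : Fin P.n → X → ℝ := fun a => (P.A a).indicator 1
  have hχm : ∀ a, Measurable (χ a) := fun a => measurable_const.indicator (P.meas a)
  have hχ0 : ∀ a x, 0 ≤ χ a x := fun a x => Set.indicator_nonneg (fun _ _ => zero_le_one) x
  have hχsum : ∀ x, ∑ a, χ a x = 1 := P.sum_indicator_one
  have hcell : ∀ σ τ, ∫ x in dynSet T P.A n σ, dynProd T Φ.f n τ x ∂μ =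
      ∫ x, dynProd T χ n σ x * dynProd T Φ.f n τ x ∂μ := by
    intro σ τ
    rw [← integral_indicator (measurableSet_dynSet hT.measurable P.meas n σ)]
    congr 1 with x
    rw [← indicator_dynSet_one]
    by_cases hx : x ∈ dynSet T P.A n σ <;> simp [hx]
  have hint : ∀ σ τ, Integrable (fun x => dynProd T χ n σ x * dynProd T Φ.f n τ x) μ :=
    fun σ τ => integrable_of_nonneg_of_le_one
      ((measurable_dynProd hT.measurable hχm n σ).mul (measurable_dynProd hT.measurable hΦ n τ))
      (fun x => mul_nonneg (dynProd_nonneg T hχ0 n σ x) (dynProd_nonneg T Φ.nonneg n τ x))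
      (fun x => mul_le_one₀
        (le_one_of_sum_eq_one (dynProd_nonneg T hχ0 n · x) (sum_dynProd T hχsum n x) σ)
        (dynProd_nonneg T Φ.nonneg n τ x)
        (le_one_of_sum_eq_one (dynProd_nonneg T Φ.nonneg n · x) (sum_dynProd T Φ.sum_one n x) τ))
  have hg : Measurable fun y => χ a y * Φ.f b y := (hχm a).mul (hΦ b)
  have hTi := hT.iterate i
  simp only [marginal, hcell]
  calc ∑ σ with σ i = a, ∑ τ with τ i = b, ∫ x, dynProd T χ n σ x * dynProd T Φ.f n τ x ∂μ
      = ∫ x, ∑ σ with σ i = a, ∑ τ with τ i = b, dynProd T χ n σ x * dynProd T Φ.f n τ x ∂μ := by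
        rw [integral_finsetSum _ fun σ _ => integrable_finsetSum _ fun τ _ => hint σ τ]
        exact sum_congr rfl fun σ _ => (integral_finsetSum _ fun τ _ => hint σ τ).symm
    _ = ∫ x, χ a (T^[i] x) * Φ.f b (T^[i] x) ∂μ := by
        congr 1 with x
        rw [← sum_mul_sum, sum_filter_dynProd T hχsum, sum_filter_dynProd T Φ.sum_one]
    _ = ∫ y, χ a y * Φ.f b y ∂μ := by
        rw [← integral_map (f := fun y => χ a y * Φ.f b y) hTi.measurable.aemeasurable
          (hTi.map_eq ▸ hg.aestronglyMeasurable), hTi.map_eq]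
    _ = ∫ x in P.A a, Φ.f b x ∂μ := by
        rw [← integral_indicator (P.meas a)]
        congr 1 with x
        by_cases hx : x ∈ P.A a <;> simp [χ, hx]

theorem statEnt_dyn_le [IsProbabilityMeasure μ] {T : X → X} (hT : Measurable T)
    {Φ : PartUnity X} (hΦ : Φ.Meas) (n : ℕ) : statEnt μ (Φ.dyn T n) ≤ n * log Φ.n := by
  rw [statEnt_dyn]
  refine (sum_negMulLog_integral_sub_le_log_card (measurable_dynProd hT hΦ n)
    (dynProd_nonneg T Φ.nonneg n) (sum_dynProd T Φ.sum_one n)).trans_eq ?_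
  rw [Fintype.card_fun, Fintype.card_fin, Fintype.card_fin, Nat.cast_pow, log_pow]

theorem sum_negMulLog_dynSet_le [IsFiniteMeasure μ] {T : X → X} (hT : MeasurePreserving T μ μ)
    (P : FinBorelPart X) {Φ : PartUnity X} (hΦ : Φ.Meas) (n : ℕ) :
    ∑ σ, negMulLog (μ.real (dynSet T P.A n σ)) ≤
      statEnt μ (Φ.dyn T n) + n * condEntropy fun a b => ∫ x in P.A a, Φ.f b x ∂μ := by
  have hmeas := measurableSet_dynSet hT.measurable P.meas n
  calc ∑ σ, negMulLog (μ.real (dynSet T P.A n σ))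
      ≤ statEnt μ (Φ.dyn T n) +
          condEntropy fun σ τ => ∫ x in dynSet T P.A n σ, dynProd T Φ.f n τ x ∂μ := by
        rw [statEnt_dyn]
        exact sum_negMulLog_measureReal_le hmeas (sum_indicator_dynSet_one P T n)
          (measurable_dynProd hT.measurable hΦ n) (dynProd_nonneg T Φ.nonneg n)
          (sum_dynProd T Φ.sum_one n)
    _ ≤ statEnt μ (Φ.dyn T n) + ∑ i : Fin n, condEntropy
          (marginal i fun σ τ => ∫ x in dynSet T P.A n σ, dynProd T Φ.f n τ x ∂μ) := by
        gcongr
        exact condEntropy_le_sum_condEntropy_marginal fun σ τ =>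
          setIntegral_nonneg (hmeas σ) fun x _ => dynProd_nonneg T Φ.nonneg n τ x
    _ = statEnt μ (Φ.dyn T n) + n * condEntropy fun a b => ∫ x in P.A a, Φ.f b x ∂μ := by
        simp [marginal_dynSet hT P hΦ]

theorem ksLocEnt_le_locEnt_add_condEntropy [IsProbabilityMeasure μ] {T : X → X}
    (hT : MeasurePreserving T μ μ) (P : FinBorelPart X) {Φ : PartUnity X} (hΦ : Φ.Meas) :
    ksLocEnt T μ P ≤ locEnt T μ Φ + condEntropy fun a b => ∫ x in P.A a, Φ.f b x ∂μ := by
  refine limsup_le_limsup_add_const ((eventually_gt_atTop 0).mono fun n hn => ?_)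
    (isBoundedUnder_of_eventually_ge (a := 0) (.of_forall fun n => div_nonneg
      (sum_nonneg fun σ _ => negMulLog_nonneg measureReal_nonneg measureReal_le_one)
      n.cast_nonneg))
    (isBoundedUnder_of_eventually_le (a := log Φ.n) ((eventually_gt_atTop 0).mono fun n hn => ?_))
  · have hn' : (0 : ℝ) < n := Nat.cast_pos.2 hn
    rw [div_add' _ _ _ hn'.ne', div_le_div_iff_of_pos_right hn', mul_comm _ (n : ℝ)]
    exact sum_negMulLog_dynSet_le hT P hΦ n
  · rw [div_le_iff₀' (Nat.cast_pos.2 hn)]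
    exact statEnt_dyn_le hT.measurable hΦ n

end KolmogorovSinai

def PartitionOfUnity.toPartUnity [TopologicalSpace X] {k : ℕ}
    (ρ : PartitionOfUnity (Fin k) X univ) : PartUnity X where
  n := k
  f i x := ρ i x
  nonneg := ρ.nonneg
  le_one := ρ.le_one
  sum_one x := by simpa [finsum_eq_sum_of_fintype] using ρ.sum_eq_one (Set.mem_univ x)

theorem PartitionOfUnity.toPartUnity_cont [TopologicalSpace X] {k : ℕ}
    (ρ : PartitionOfUnity (Fin k) X univ) :
    ρ.toPartUnity.Cont := fun i => (ρ i).continuous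

/-- Approximate each atom `A a` from inside by a closed `F a` and take a partition of unity
subordinate to the open cover `V a = X \ ⋃_{c ≠ a} F c`: then `ρ b` vanishes on `F a` for `a ≠ b`,
so its integral over `A a` is at most `μ (A a \ F a)`. -/
theorem FinBorelPart.exists_partitionOfUnity_setIntegral_le [MetricSpace X] [MeasurableSpace X]
    [BorelSpace X] (μ : Measure X) [IsFiniteMeasure μ] (P : FinBorelPart X) {ε : ℝ} (hε : 0 < ε) :
    ∃ ρ : PartitionOfUnity (Fin P.n) X univ, ∀ a b, a ≠ b → ∫ x in P.A a, ρ b x ∂μ ≤ ε := by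
  have hinner : ∀ a, ∃ F ⊆ P.A a, IsClosed F ∧ μ (P.A a \ F) < ENNReal.ofReal ε := fun a =>
    (P.meas a).exists_isClosed_sdiff_lt (measure_ne_top μ _) (by simpa using hε)
  choose F hFA hFc hF using hinner
  set V : Fin P.n → Set X := fun a => (⋃ (c) (_ : c ≠ a), F c)ᶜ
  have hVo : ∀ a, IsOpen (V a) := fun a =>
    (isClosed_iUnion_of_finite fun c => isClosed_iUnion_of_finite fun _ => hFc c).isOpen_compl
  have hFV : ∀ a b, a ≠ b → Disjoint (F a) (V b) := fun a b hab =>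
    Set.disjoint_compl_right_iff_subset.2 (Set.subset_biUnion_of_mem (u := F) hab)
  have hAV : ∀ a, P.A a ⊆ V a := fun a x hx => by
    simp only [V, Set.mem_compl_iff, Set.mem_iUnion, not_exists]
    exact fun c hca hxc => Set.disjoint_left.1 (P.disj c a hca) (hFA c hxc) hx
  obtain ⟨ρ, hρ⟩ := PartitionOfUnity.exists_isSubordinate isClosed_univ V hVo
    (P.cover ▸ Set.iUnion_mono hAV)
  refine ⟨ρ, fun a b hab => ?_⟩
  have hzero : ∀ x ∈ P.A a \ (P.A a \ F a), ρ b x = 0 := fun x hx =>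
    image_eq_zero_of_notMem_tsupport fun hxs =>
      Set.disjoint_left.1 (hFV a b hab) (by simpa [hx.1] using hx.2) (hρ b hxs)
  calc ∫ x in P.A a, ρ b x ∂μ = ∫ x in P.A a \ F a, ρ b x ∂μ :=
        setIntegral_eq_of_subset_of_forall_sdiff_eq_zero (P.meas a) Set.sdiff_subset hzero
    _ ≤ 1 * μ.real (P.A a \ F a) := (le_abs_self _).trans
        (norm_setIntegral_le_of_norm_le_const (measure_lt_top μ _) fun x _ => by
          rw [Real.norm_of_nonneg (ρ.nonneg b x)]; exact ρ.le_one b x)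
    _ ≤ ε := by
        rw [one_mul]
        exact ENNReal.toReal_le_of_le_ofReal hε.le (hF a).le

theorem FinBorelPart.exists_partitionOfUnity_condEntropy_le [MetricSpace X] [MeasurableSpace X]
    [BorelSpace X] (μ : Measure X) [IsProbabilityMeasure μ] (P : FinBorelPart X) {δ : ℝ}
    (hδ : 0 < δ) : ∃ ρ : PartitionOfUnity (Fin P.n) X univ,
      condEntropy (fun a b => ∫ x in P.A a, ρ b x ∂μ) ≤ δ := by
  have hsmall : Tendsto (fun ε => (P.n : ℝ) ^ 2 * (ε + negMulLog ε)) (𝓝[>] 0) (𝓝 0) := by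
    have h : Continuous fun ε => (P.n : ℝ) ^ 2 * (ε + negMulLog ε) := by fun_prop
    replace h := h.tendsto 0
    simpa using h.mono_left (nhdsWithin_le_nhds (s := Set.Ioi 0))
  obtain ⟨ε, hεδ, hε0, hεe⟩ :=
    ((hsmall.eventually (ge_mem_nhds hδ)).and (Ioo_mem_nhdsGT (exp_pos (-1)))).exists
  obtain ⟨ρ, hρ⟩ := P.exists_partitionOfUnity_setIntegral_le μ hε0
  have hcol : ∀ b, ∑ a, ∫ x in P.A a, ρ b x ∂μ ≤ 1 := fun b => by
    have hint := integrable_of_nonneg_of_le_one (μ := μ) (ρ b).continuous.measurable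
      (ρ.nonneg b) (ρ.le_one b)
    rw [← integral_eq_sum_setIntegral P.meas P.sum_indicator_one hint]
    calc ∫ x, ρ b x ∂μ ≤ ∫ _x, (1 : ℝ) ∂μ := integral_mono hint (integrable_const 1) (ρ.le_one b)
      _ = 1 := by simp
  refine ⟨ρ, le_trans ?_ hεδ⟩
  simpa using condEntropy_le_of_offDiag_le
    (fun a b => setIntegral_nonneg (P.meas a) fun x _ => ρ.nonneg b x) hcol hε0.le hεe.le hρ

theorem ksEnt_le_metEnt_general {X : Type*} [MetricSpace X]
    [MeasurableSpace X] [BorelSpace X]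
    (T : X → X)
    (μ : Measure X) [IsProbabilityMeasure μ] (hμ : MeasurePreserving T μ μ) :
    ksEnt T μ ≤ metEnt T μ := by
  refine iSup_le fun P => le_of_forall_lt_imp_le_of_dense fun y hy => ?_
  induction y using EReal.rec with
  | bot => exact bot_le
  | top => exact absurd hy not_top_lt
  | coe y =>
    obtain ⟨ρ, hρ⟩ := P.exists_partitionOfUnity_condEntropy_le μ
      (sub_pos.2 (EReal.coe_lt_coe_iff.1 hy))
    have hks : ksLocEnt T μ P ≤ locEnt T μ ρ.toPartUnity +
        condEntropy fun a b => ∫ x in P.A a, ρ b x ∂μ :=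
      ksLocEnt_le_locEnt_add_condEntropy hμ P fun i => (ρ i).continuous.measurable
    refine le_trans ?_ (le_iSup (fun Φ : {Φ : PartUnity X // Φ.Cont} => (locEnt T μ Φ.1 : EReal))
      ⟨ρ.toPartUnity, ρ.toPartUnity_cont⟩)
    exact EReal.coe_le_coe_iff.2 (show y ≤ locEnt T μ ρ.toPartUnity by linarith)

/-- `h̃_μ(T) ≥ h_μ(T)`: the partition-of-unity metric entropy dominates
the Kolmogorov–Sinai entropy. -/
theorem ksEnt_le_metEnt {X : Type*} [MetricSpace X] [CompactSpace X] [Nonempty X]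
    [MeasurableSpace X] [BorelSpace X]
    (T : X → X) (hT : Continuous T) (hTsurj : Function.Surjective T)
    (μ : Measure X) [IsProbabilityMeasure μ] (hμ : MeasurePreserving T μ μ) :
    ksEnt T μ ≤ metEnt T μ :=
  ksEnt_le_metEnt_general T μ hμ
end
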